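/- arXiv:2505.15606 — 3 statements merged into one kernel-verified Lean document; each statement's English description precedes it below -/
import Mathlib

section
/- Fix an integer r ≥ 2 and a residue i ∈ ℤ/rℤ. For any partition λ, let B_λ^{(i)} = Σ_{□∈λ, c̄(□)=i} χ_□ and define D_λ^{(i)} = −t B_λ^{(i−1)} + (1+qt) B_λ^{(i)} − q B_λ^{(i+1)} − δ_{i,0}. Then D_λ^{(i)} = q t Σ_{□∈R_i(λ)} χ_□ − Σ_{□∈A_i(λ)} χ_□, where A_i(λ) and R_i(λ) are the addable and removable corners of λ whose content is congruent to i modulo r. -/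
open MvPolynomial

noncomputable def q : MvPolynomial (Fin 2) ℤ := X 0
noncomputable def t : MvPolynomial (Fin 2) ℤ := X 1

/-- The character of a cell `(row, column)`: `χ = q^column * t^row`. -/
noncomputable def chi (c : ℕ × ℕ) : MvPolynomial (Fin 2) ℤ := q ^ c.2 * t ^ c.1

/-- The color of a cell `(row, column)` is its content `row - column`
(in the paper's Cartesian convention `(a,b)` with `a` the column and `b`
the row, the content is `b - a`) taken modulo `r`. -/
def cellColor (r : ℕ) (c : ℕ × ℕ) : ZMod r := (((c.1 : ℤ) - (c.2 : ℤ) : ℤ) : ZMod r)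

def IsAddable (μ : YoungDiagram) (c : ℕ × ℕ) : Prop :=
  c ∉ μ ∧ IsLowerSet (insert c (μ.cells : Set (ℕ × ℕ)))

def IsRemovable (μ : YoungDiagram) (c : ℕ × ℕ) : Prop :=
  c ∈ μ ∧ IsLowerSet ((μ.cells : Set (ℕ × ℕ)) \ {c})

/-- `B_λ^{(i)}`, the sum of characters of the cells of `λ` of color `i`. -/
noncomputable def Bcol (r : ℕ) (μ : YoungDiagram) (i : ZMod r) :
    MvPolynomial (Fin 2) ℤ :=
  ∑ᶠ c ∈ {c : ℕ × ℕ | c ∈ μ ∧ cellColor r c = i}, chi c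

lemma chi_up (a b : ℕ) : chi (a + 1, b) = t * chi (a, b) := by
  simp [chi, pow_succ]; ring

lemma chi_right (a b : ℕ) : chi (a, b + 1) = q * chi (a, b) := by
  simp [chi, pow_succ]; ring

lemma chi_diag (a b : ℕ) : chi (a + 1, b + 1) = q * t * chi (a, b) := by
  simp [chi, pow_succ]; ring

lemma chi_zero : chi (0, 0) = 1 := by simp [chi]

lemma col_up (r : ℕ) (a b : ℕ) : cellColor r (a + 1, b) = cellColor r (a, b) + 1 := by
  simp only [cellColor]; push_cast; ring

lemma col_right (r : ℕ) (a b : ℕ) : cellColor r (a, b + 1) = cellColor r (a, b) - 1 := by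
  simp only [cellColor]; push_cast; ring

lemma col_diag (r : ℕ) (a b : ℕ) : cellColor r (a + 1, b + 1) = cellColor r (a, b) := by
  simp only [cellColor]; push_cast; ring

lemma col_zero (r : ℕ) : cellColor r (0, 0) = 0 := by simp [cellColor]

section helper
open Classical in
lemma sum_indicator_eq {M : Type*} [AddCommMonoid M] (f : ℕ × ℕ → M)
    {F T : Finset (ℕ × ℕ)} {S : Set (ℕ × ℕ)}
    (h : ∀ c, c ∈ S ↔ c ∈ F) (hT : F ⊆ T) :
    ∑ c ∈ T, S.indicator f c = ∑ c ∈ F, f c := by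
  classical
  calc ∑ c ∈ T, S.indicator f c = ∑ c ∈ T, if c ∈ F then f c else 0 := by
        refine Finset.sum_congr rfl fun c _ => ?_
        by_cases hc : c ∈ F
        · rw [if_pos hc, Set.indicator_of_mem ((h c).mpr hc)]
        · rw [if_neg hc, Set.indicator_of_notMem (fun hs => hc ((h c).mp hs))]
    _ = ∑ c ∈ T.filter (· ∈ F), f c := (Finset.sum_filter _ _).symm
    _ = ∑ c ∈ F, f c := by
        congr 1
        ext c
        simp only [Finset.mem_filter]
        exact ⟨And.right, fun hc => ⟨hT hc, hc⟩⟩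
end helper

lemma finsum_mem_eq_finset_sum {M : Type*} [AddCommMonoid M] (f : ℕ × ℕ → M)
    {F : Finset (ℕ × ℕ)} {S : Set (ℕ × ℕ)} (h : ∀ c, c ∈ S ↔ c ∈ F) :
    ∑ᶠ c ∈ S, f c = ∑ c ∈ F, f c := by
  have : S = ↑F := Set.ext fun c => (h c).trans (Finset.mem_coe).symm
  rw [this, finsum_mem_coe_finset]

lemma isRemovable_iff (μ : YoungDiagram) (c : ℕ × ℕ) :
    IsRemovable μ c ↔ c ∈ μ ∧ (c.1 + 1, c.2) ∉ μ ∧ (c.1, c.2 + 1) ∉ μ := by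
  obtain ⟨a, b⟩ := c
  constructor
  · rintro ⟨hm, hls⟩
    refine ⟨hm, fun h1 => ?_, fun h2 => ?_⟩
    · have : (a, b) ∈ ((μ.cells : Set (ℕ × ℕ)) \ {(a, b)}) := by
        refine hls (b := (a, b)) ⟨Nat.le_succ a, le_refl b⟩ ⟨by simpa using h1, by simp⟩
      simp at this
    · have : (a, b) ∈ ((μ.cells : Set (ℕ × ℕ)) \ {(a, b)}) := by
        refine hls (b := (a, b)) (⟨le_refl a, Nat.le_succ b⟩ : (a,b) ≤ (a, b+1)) ⟨by simpa using h2, by simp⟩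
      simp at this
  · rintro ⟨hm, h1, h2⟩
    refine ⟨hm, fun x y hyx hx => ?_⟩
    obtain ⟨hx1, hx2⟩ := hx
    have hyμ : y ∈ μ := μ.up_left_mem hyx.1 hyx.2 (by simpa using hx1)
    refine ⟨by simpa using hyμ, ?_⟩
    simp only [Set.mem_singleton_iff]
    rintro rfl
    rcases Nat.lt_or_ge a x.1 with h | h
    · exact h1 (μ.up_left_mem h hyx.2 (by simpa using hx1))
    · rcases Nat.lt_or_ge b x.2 with h' | h'
      · exact h2 (μ.up_left_mem hyx.1 h' (by simpa using hx1))
      · exact hx2 (by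
          have e1 : x.1 = a := le_antisymm h hyx.1
          have e2 : x.2 = b := le_antisymm h' hyx.2
          simp [Prod.ext_iff, e1, e2])

lemma isAddable_iff (μ : YoungDiagram) (c : ℕ × ℕ) :
    IsAddable μ c ↔ c ∉ μ ∧ (c.1 = 0 ∨ (c.1 - 1, c.2) ∈ μ) ∧ (c.2 = 0 ∨ (c.1, c.2 - 1) ∈ μ) := by
  obtain ⟨a, b⟩ := c
  constructor
  · rintro ⟨hm, hls⟩
    refine ⟨hm, ?_, ?_⟩
    · rcases Nat.eq_zero_or_pos a with h | h
      · exact Or.inl h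
      · right
        have : (a - 1, b) ∈ insert (a, b) (μ.cells : Set (ℕ × ℕ)) :=
          hls (b := (a - 1, b)) ⟨Nat.sub_le a 1, le_refl b⟩ (Set.mem_insert _ _)
        rcases this with h' | h'
        · exfalso
          have := congrArg Prod.fst h'
          simp at this; omega
        · simpa using h'
    · rcases Nat.eq_zero_or_pos b with h | h
      · exact Or.inl h
      · right
        have : (a, b - 1) ∈ insert (a, b) (μ.cells : Set (ℕ × ℕ)) :=
          hls (b := (a, b - 1)) ⟨le_refl a, Nat.sub_le b 1⟩ (Set.mem_insert _ _)
        rcases this with h' | h'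
        · exfalso
          have := congrArg Prod.snd h'
          simp at this; omega
        · simpa using h'
  · rintro ⟨hm, h1, h2⟩
    refine ⟨hm, fun x y hyx hx => ?_⟩
    rcases hx with h | hx
    · subst h
      by_cases hy : y = (a, b)
      · exact hy ▸ Set.mem_insert _ _
      · right
        rcases Nat.lt_or_ge y.1 a with h | h
        · rcases h1 with h1 | h1
          · omega
          · have : y ∈ μ := μ.up_left_mem (by simp at h1 ⊢; omega) (by simpa using hyx.2) h1
            simpa using this
        · rcases Nat.lt_or_ge y.2 b with h' | h'
          · rcases h2 with h2 | h2
            · omega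
            · have : y ∈ μ := μ.up_left_mem (by simpa using hyx.1) (by simp; omega) h2
              simpa using this
          · exact absurd (Prod.ext (le_antisymm (by simpa using hyx.1) h).symm
              (le_antisymm (by simpa using hyx.2) h').symm).symm hy
    · right
      have : y ∈ μ := μ.up_left_mem hyx.1 hyx.2 (by simpa using hx)
      simpa using this

open Classical in
lemma key_pointwise (r : ℕ) (μ : YoungDiagram) (i : ZMod r) (c : ℕ × ℕ) :
    Set.indicator {c : ℕ × ℕ | c ∈ μ ∧ cellColor r c = i} chi c
      + Set.indicator {c : ℕ × ℕ | 1 ≤ c.1 ∧ 1 ≤ c.2 ∧ (c.1 - 1, c.2 - 1) ∈ μ ∧ cellColor r c = i} chi c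
      - Set.indicator {c : ℕ × ℕ | 1 ≤ c.1 ∧ (c.1 - 1, c.2) ∈ μ ∧ cellColor r c = i} chi c
      - Set.indicator {c : ℕ × ℕ | 1 ≤ c.2 ∧ (c.1, c.2 - 1) ∈ μ ∧ cellColor r c = i} chi c
      - Set.indicator {c : ℕ × ℕ | c = (0, 0) ∧ i = 0} chi c
    = Set.indicator {c : ℕ × ℕ | 1 ≤ c.1 ∧ 1 ≤ c.2 ∧ IsRemovable μ (c.1 - 1, c.2 - 1) ∧ cellColor r c = i} chi c
      - Set.indicator {c : ℕ × ℕ | IsAddable μ c ∧ cellColor r c = i} chi c := by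
  obtain ⟨a, b⟩ := c
  by_cases hcol : cellColor r (a, b) = i
  · match a, b with
    | 0, 0 =>
      have hi : i = 0 := by rw [← hcol, col_zero]
      have hc0 : cellColor r (0 : ℕ × ℕ) = 0 := col_zero r
      by_cases hm : (0, 0) ∈ μ
      · have hm0 : (0 : ℕ × ℕ) ∈ μ := hm
        simp [Set.indicator_apply, isAddable_iff, hm, hm0, hcol, hi, hc0]
      · have hm0 : (0 : ℕ × ℕ) ∉ μ := hm
        simp [Set.indicator_apply, isAddable_iff, hm, hm0, hcol, hi, hc0]
    | 0, b + 1 =>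
      by_cases hm : (0, b + 1) ∈ μ
      · have hl : (0, b) ∈ μ := μ.up_left_mem le_rfl (Nat.le_succ b) hm
        simp [Set.indicator_apply, isAddable_iff, hm, hl, hcol]
      · by_cases hl : (0, b) ∈ μ
        · simp [Set.indicator_apply, isAddable_iff, hm, hl, hcol]
        · simp [Set.indicator_apply, isAddable_iff, hm, hl, hcol]
    | a + 1, 0 =>
      by_cases hm : (a + 1, 0) ∈ μ
      · have hu : (a, 0) ∈ μ := μ.up_left_mem (Nat.le_succ a) le_rfl hm
        simp [Set.indicator_apply, isAddable_iff, hm, hu, hcol]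
      · by_cases hu : (a, 0) ∈ μ
        · simp [Set.indicator_apply, isAddable_iff, hm, hu, hcol]
        · simp [Set.indicator_apply, isAddable_iff, hm, hu, hcol]
    | a + 1, b + 1 =>
      by_cases hd : (a, b) ∈ μ
      · by_cases hu : (a, b + 1) ∈ μ
        · by_cases hl : (a + 1, b) ∈ μ
          · by_cases hm : (a + 1, b + 1) ∈ μ
            · simp [Set.indicator_apply, isAddable_iff, isRemovable_iff, hm, hu, hl, hd, hcol]
            · simp [Set.indicator_apply, isAddable_iff, isRemovable_iff, hm, hu, hl, hd, hcol]
          · have hm : (a + 1, b + 1) ∉ μ := fun h => hl (μ.up_left_mem le_rfl (Nat.le_succ b) h)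
            simp [Set.indicator_apply, isAddable_iff, isRemovable_iff, hm, hu, hl, hd, hcol]
        · by_cases hl : (a + 1, b) ∈ μ
          · have hm : (a + 1, b + 1) ∉ μ := fun h => hu (μ.up_left_mem (Nat.le_succ a) le_rfl h)
            simp [Set.indicator_apply, isAddable_iff, isRemovable_iff, hm, hu, hl, hd, hcol]
          · have hm : (a + 1, b + 1) ∉ μ := fun h => hu (μ.up_left_mem (Nat.le_succ a) le_rfl h)
            simp [Set.indicator_apply, isAddable_iff, isRemovable_iff, hm, hu, hl, hd, hcol]
      · have hu : (a, b + 1) ∉ μ := fun h => hd (μ.up_left_mem le_rfl (Nat.le_succ b) h)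
        have hl : (a + 1, b) ∉ μ := fun h => hd (μ.up_left_mem (Nat.le_succ a) le_rfl h)
        have hm : (a + 1, b + 1) ∉ μ := fun h => hd (μ.up_left_mem (Nat.le_succ a) (Nat.le_succ b) h)
        simp [Set.indicator_apply, isAddable_iff, isRemovable_iff, hm, hu, hl, hd, hcol]
  · have h0 : ¬((a, b) = ((0 : ℕ), (0 : ℕ)) ∧ i = 0) := by
      rintro ⟨h1, h2⟩
      apply hcol
      rw [h1, col_zero, h2]
    simp only [Set.indicator_apply, Set.mem_setOf_eq]
    rw [if_neg (fun h => hcol h.2), if_neg (fun h => hcol h.2.2.2),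
      if_neg (fun h => hcol h.2.2), if_neg (fun h => hcol h.2.2),
      if_neg h0, if_neg (fun h => hcol h.2.2.2), if_neg (fun h => hcol h.2)]
    ring

lemma mul_sum_eq_sum_image (x : MvPolynomial (Fin 2) ℤ) (σ : ℕ × ℕ → ℕ × ℕ)
    (hσ : Function.Injective σ) (hchi : ∀ d, chi (σ d) = x * chi d) (F : Finset (ℕ × ℕ)) :
    x * ∑ c ∈ F, chi c = ∑ c ∈ F.image σ, chi c := by
  rw [Finset.sum_image (fun a _ b _ h => hσ h), Finset.mul_sum]
  exact Finset.sum_congr rfl fun c _ => (hchi c).symm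


/-- The colored corner formula:
`D_λ^{(i)} = -t B^{(i-1)} + (1+qt) B^{(i)} - q B^{(i+1)} - δ_{i,0}
 = q t Σ_{□∈R_i(λ)} χ_□ - Σ_{□∈A_i(λ)} χ_□`. -/
theorem colored_corner_formula (r : ℕ) (hr : 2 ≤ r) (μ : YoungDiagram)
    (i : ZMod r) :
    -t * Bcol r μ (i - 1) + (1 + q * t) * Bcol r μ i - q * Bcol r μ (i + 1)
        - (if i = 0 then 1 else 0) =
      q * t * (∑ᶠ c ∈ {c | IsRemovable μ c ∧ cellColor r c = i}, chi c) -
        ∑ᶠ c ∈ {c | IsAddable μ c ∧ cellColor r c = i}, chi c := by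
  classical
  set N : ℕ := (μ.cells.sup fun c => c.1 + c.2) + 1 with hNdef
  have hbound : ∀ c : ℕ × ℕ, c ∈ μ → c.1 < N ∧ c.2 < N := by
    intro c hc
    have h : c.1 + c.2 ≤ μ.cells.sup fun c => c.1 + c.2 :=
      Finset.le_sup (f := fun c : ℕ × ℕ => c.1 + c.2) ((μ.mem_cells c).mpr hc)
    omega
  set T : Finset (ℕ × ℕ) := Finset.range (N + 1) ×ˢ Finset.range (N + 1) with hTdef
  have hmemT : ∀ c : ℕ × ℕ, c.1 ≤ N → c.2 ≤ N → c ∈ T := by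
    intro c h1 h2
    simp only [hTdef, Finset.mem_product, Finset.mem_range, Nat.lt_succ_iff]
    exact ⟨h1, h2⟩
  set G1 : Finset (ℕ × ℕ) := μ.cells.filter (fun c => cellColor r c = i - 1) with hG1
  set G2 : Finset (ℕ × ℕ) := μ.cells.filter (fun c => cellColor r c = i) with hG2
  set G3 : Finset (ℕ × ℕ) := μ.cells.filter (fun c => cellColor r c = i + 1) with hG3
  set Grem : Finset (ℕ × ℕ) :=
    μ.cells.filter (fun c => IsRemovable μ c ∧ cellColor r c = i) with hGrem
  set Fadd : Finset (ℕ × ℕ) :=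
    T.filter (fun c => IsAddable μ c ∧ cellColor r c = i) with hFadd
  -- unfold the three Bcol's and the two corner finsums to finset sums
  have e1 : Bcol r μ (i - 1) = ∑ c ∈ G1, chi c :=
    finsum_mem_eq_finset_sum _ (fun c => by
      simp [hG1, Finset.mem_filter, μ.mem_cells])
  have e2 : Bcol r μ i = ∑ c ∈ G2, chi c :=
    finsum_mem_eq_finset_sum _ (fun c => by
      simp [hG2, Finset.mem_filter, μ.mem_cells])
  have e3 : Bcol r μ (i + 1) = ∑ c ∈ G3, chi c :=
    finsum_mem_eq_finset_sum _ (fun c => by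
      simp [hG3, Finset.mem_filter, μ.mem_cells])
  have erem : (∑ᶠ c ∈ {c | IsRemovable μ c ∧ cellColor r c = i}, chi c) = ∑ c ∈ Grem, chi c :=
    finsum_mem_eq_finset_sum _ (fun c => by
      simp only [Set.mem_setOf_eq, hGrem, Finset.mem_filter, μ.mem_cells]
      exact ⟨fun h => ⟨h.1.1, h⟩, fun h => h.2⟩)
  have haddT : ∀ c : ℕ × ℕ, IsAddable μ c → c ∈ T := by
    intro c ha
    rw [isAddable_iff] at ha
    obtain ⟨-, h1, h2⟩ := ha
    apply hmemT
    · rcases h1 with h | h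
      · omega
      · have := (hbound _ h).1; omega
    · rcases h2 with h | h
      · omega
      · have := (hbound _ h).2; omega
  have eadd : (∑ᶠ c ∈ {c | IsAddable μ c ∧ cellColor r c = i}, chi c) = ∑ c ∈ Fadd, chi c :=
    finsum_mem_eq_finset_sum _ (fun c => by
      simp only [Set.mem_setOf_eq, hFadd, Finset.mem_filter]
      exact ⟨fun h => ⟨haddT c h.1, h⟩, fun h => h.2⟩)
  -- the five indicator conversions
  have hmem : ∑ c ∈ G2, chi c
      = ∑ c ∈ T, Set.indicator {c : ℕ × ℕ | c ∈ μ ∧ cellColor r c = i} chi c := by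
    refine (sum_indicator_eq chi (fun c => ?_) ?_).symm
    · simp [hG2, Finset.mem_filter, μ.mem_cells]
    · intro c hc
      rw [hG2, Finset.mem_filter, μ.mem_cells] at hc
      have := hbound c hc.1
      exact hmemT c (by omega) (by omega)
  have hup : t * ∑ c ∈ G1, chi c
      = ∑ c ∈ T, Set.indicator
          {c : ℕ × ℕ | 1 ≤ c.1 ∧ (c.1 - 1, c.2) ∈ μ ∧ cellColor r c = i} chi c := by
    rw [mul_sum_eq_sum_image t (fun d => (d.1 + 1, d.2))
      (fun x y h => by
        have h1 := congrArg Prod.fst h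
        have h2 := congrArg Prod.snd h
        simp at h1 h2
        exact Prod.ext h1 h2)
      (fun d => chi_up d.1 d.2) G1]
    refine (sum_indicator_eq chi (fun c => ?_) ?_).symm
    · obtain ⟨a, b⟩ := c
      simp only [Set.mem_setOf_eq, Finset.mem_image, hG1, Finset.mem_filter, μ.mem_cells]
      constructor
      · rintro ⟨h1, h2, h3⟩
        obtain ⟨a, rfl⟩ : ∃ a', a = a' + 1 := ⟨a - 1, by omega⟩
        simp only [Nat.add_sub_cancel] at h2
        refine ⟨(a, b), ⟨h2, ?_⟩, rfl⟩
        rw [col_up] at h3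
        exact eq_sub_of_add_eq h3
      · rintro ⟨⟨da, db⟩, ⟨hd, hc⟩, h⟩
        obtain ⟨rfl, rfl⟩ : da + 1 = a ∧ db = b := by
          constructor
          · exact congrArg Prod.fst h
          · exact congrArg Prod.snd h
        refine ⟨Nat.succ_le_succ (Nat.zero_le _), by simpa using hd, ?_⟩
        rw [col_up, hc, sub_add_cancel]
    · intro c hc
      rw [Finset.mem_image] at hc
      obtain ⟨d, hd, rfl⟩ := hc
      rw [hG1, Finset.mem_filter, μ.mem_cells] at hd
      have := hbound d hd.1
      exact hmemT _ (by simp; omega) (by simp; omega)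
  have hright : q * ∑ c ∈ G3, chi c
      = ∑ c ∈ T, Set.indicator
          {c : ℕ × ℕ | 1 ≤ c.2 ∧ (c.1, c.2 - 1) ∈ μ ∧ cellColor r c = i} chi c := by
    rw [mul_sum_eq_sum_image q (fun d => (d.1, d.2 + 1))
      (fun x y h => by
        have h1 := congrArg Prod.fst h
        have h2 := congrArg Prod.snd h
        simp at h1 h2
        exact Prod.ext h1 h2)
      (fun d => chi_right d.1 d.2) G3]
    refine (sum_indicator_eq chi (fun c => ?_) ?_).symm
    · obtain ⟨a, b⟩ := c
      simp only [Set.mem_setOf_eq, Finset.mem_image, hG3, Finset.mem_filter, μ.mem_cells]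
      constructor
      · rintro ⟨h1, h2, h3⟩
        obtain ⟨b, rfl⟩ : ∃ b', b = b' + 1 := ⟨b - 1, by omega⟩
        simp only [Nat.add_sub_cancel] at h2
        refine ⟨(a, b), ⟨h2, ?_⟩, rfl⟩
        rw [col_right] at h3
        exact eq_add_of_sub_eq h3
      · rintro ⟨⟨da, db⟩, ⟨hd, hc⟩, h⟩
        obtain ⟨rfl, rfl⟩ : da = a ∧ db + 1 = b := by
          constructor
          · exact congrArg Prod.fst h
          · exact congrArg Prod.snd h
        refine ⟨Nat.succ_le_succ (Nat.zero_le _), by simpa using hd, ?_⟩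
        rw [col_right, hc, add_sub_cancel_right]
    · intro c hc
      rw [Finset.mem_image] at hc
      obtain ⟨d, hd, rfl⟩ := hc
      rw [hG3, Finset.mem_filter, μ.mem_cells] at hd
      have := hbound d hd.1
      exact hmemT _ (by simp; omega) (by simp; omega)
  have hdiag : q * t * ∑ c ∈ G2, chi c
      = ∑ c ∈ T, Set.indicator
          {c : ℕ × ℕ | 1 ≤ c.1 ∧ 1 ≤ c.2 ∧ (c.1 - 1, c.2 - 1) ∈ μ ∧ cellColor r c = i} chi c := by
    rw [mul_sum_eq_sum_image (q * t) (fun d => (d.1 + 1, d.2 + 1))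
      (fun x y h => by
        have h1 := congrArg Prod.fst h
        have h2 := congrArg Prod.snd h
        simp at h1 h2
        exact Prod.ext h1 h2)
      (fun d => chi_diag d.1 d.2) G2]
    refine (sum_indicator_eq chi (fun c => ?_) ?_).symm
    · obtain ⟨a, b⟩ := c
      simp only [Set.mem_setOf_eq, Finset.mem_image, hG2, Finset.mem_filter, μ.mem_cells]
      constructor
      · rintro ⟨h1, h1', h2, h3⟩
        obtain ⟨a, rfl⟩ : ∃ a', a = a' + 1 := ⟨a - 1, by omega⟩
        obtain ⟨b, rfl⟩ : ∃ b', b = b' + 1 := ⟨b - 1, by omega⟩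
        simp only [Nat.add_sub_cancel] at h2
        refine ⟨(a, b), ⟨h2, ?_⟩, rfl⟩
        rw [col_diag] at h3
        exact h3
      · rintro ⟨⟨da, db⟩, ⟨hd, hc⟩, h⟩
        obtain ⟨rfl, rfl⟩ : da + 1 = a ∧ db + 1 = b := by
          constructor
          · exact congrArg Prod.fst h
          · exact congrArg Prod.snd h
        refine ⟨Nat.succ_le_succ (Nat.zero_le _), Nat.succ_le_succ (Nat.zero_le _),
          by simpa using hd, ?_⟩
        rw [col_diag, hc]
    · intro c hc
      rw [Finset.mem_image] at hc
      obtain ⟨d, hd, rfl⟩ := hc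
      rw [hG2, Finset.mem_filter, μ.mem_cells] at hd
      have := hbound d hd.1
      exact hmemT _ (by simp; omega) (by simp; omega)
  have hremi : q * t * ∑ c ∈ Grem, chi c
      = ∑ c ∈ T, Set.indicator
          {c : ℕ × ℕ | 1 ≤ c.1 ∧ 1 ≤ c.2 ∧ IsRemovable μ (c.1 - 1, c.2 - 1)
            ∧ cellColor r c = i} chi c := by
    rw [mul_sum_eq_sum_image (q * t) (fun d => (d.1 + 1, d.2 + 1))
      (fun x y h => by
        have h1 := congrArg Prod.fst h
        have h2 := congrArg Prod.snd h
        simp at h1 h2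
        exact Prod.ext h1 h2)
      (fun d => chi_diag d.1 d.2) Grem]
    refine (sum_indicator_eq chi (fun c => ?_) ?_).symm
    · obtain ⟨a, b⟩ := c
      simp only [Set.mem_setOf_eq, Finset.mem_image, hGrem, Finset.mem_filter, μ.mem_cells]
      constructor
      · rintro ⟨h1, h1', h2, h3⟩
        obtain ⟨a, rfl⟩ : ∃ a', a = a' + 1 := ⟨a - 1, by omega⟩
        obtain ⟨b, rfl⟩ : ∃ b', b = b' + 1 := ⟨b - 1, by omega⟩
        simp only [Nat.add_sub_cancel] at h2
        refine ⟨(a, b), ⟨h2.1, h2, ?_⟩, rfl⟩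
        rw [col_diag] at h3
        exact h3
      · rintro ⟨⟨da, db⟩, ⟨hd, hrm, hc⟩, h⟩
        obtain ⟨rfl, rfl⟩ : da + 1 = a ∧ db + 1 = b := by
          constructor
          · exact congrArg Prod.fst h
          · exact congrArg Prod.snd h
        refine ⟨Nat.succ_le_succ (Nat.zero_le _), Nat.succ_le_succ (Nat.zero_le _),
          by simpa using hrm, ?_⟩
        rw [col_diag, hc]
    · intro c hc
      rw [Finset.mem_image] at hc
      obtain ⟨d, hd, rfl⟩ := hc
      rw [hGrem, Finset.mem_filter, μ.mem_cells] at hd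
      have := hbound d hd.1
      exact hmemT _ (by simp; omega) (by simp; omega)
  have haddi : ∑ c ∈ Fadd, chi c
      = ∑ c ∈ T, Set.indicator
          {c : ℕ × ℕ | IsAddable μ c ∧ cellColor r c = i} chi c := by
    refine (sum_indicator_eq chi (fun c => ?_) (Finset.filter_subset _ _)).symm
    simp only [Set.mem_setOf_eq, hFadd, Finset.mem_filter]
    exact ⟨fun h => ⟨haddT c h.1, h⟩, fun h => h.2⟩
  have hdelta : (if i = 0 then (1 : MvPolynomial (Fin 2) ℤ) else 0)
      = ∑ c ∈ T, Set.indicator {c : ℕ × ℕ | c = (0, 0) ∧ i = 0} chi c := by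
    by_cases hi : i = 0
    · rw [if_pos hi]
      rw [sum_indicator_eq chi (F := {((0 : ℕ), (0 : ℕ))})
        (fun c => by simp [hi]) (by
          intro c hc
          simp only [Finset.mem_singleton] at hc
          subst hc
          exact hmemT _ (Nat.zero_le _) (Nat.zero_le _))]
      simp [chi]
    · rw [if_neg hi]
      refine (Finset.sum_eq_zero fun c _ => ?_).symm
      exact Set.indicator_of_notMem (fun h => hi h.2) _
  have main : ∑ c ∈ T,
      (Set.indicator {c : ℕ × ℕ | c ∈ μ ∧ cellColor r c = i} chi c
        + Set.indicator {c : ℕ × ℕ | 1 ≤ c.1 ∧ 1 ≤ c.2 ∧ (c.1 - 1, c.2 - 1) ∈ μ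
            ∧ cellColor r c = i} chi c
        - Set.indicator {c : ℕ × ℕ | 1 ≤ c.1 ∧ (c.1 - 1, c.2) ∈ μ ∧ cellColor r c = i} chi c
        - Set.indicator {c : ℕ × ℕ | 1 ≤ c.2 ∧ (c.1, c.2 - 1) ∈ μ ∧ cellColor r c = i} chi c
        - Set.indicator {c : ℕ × ℕ | c = (0, 0) ∧ i = 0} chi c)
      = ∑ c ∈ T,
      (Set.indicator {c : ℕ × ℕ | 1 ≤ c.1 ∧ 1 ≤ c.2 ∧ IsRemovable μ (c.1 - 1, c.2 - 1)
            ∧ cellColor r c = i} chi c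
        - Set.indicator {c : ℕ × ℕ | IsAddable μ c ∧ cellColor r c = i} chi c) :=
    Finset.sum_congr rfl fun c _ => key_pointwise r μ i c
  simp only [Finset.sum_sub_distrib, Finset.sum_add_distrib] at main
  rw [e1, e2, e3, erem, eadd, hdelta, haddi]
  linear_combination main - hup + hdiag + hmem - hright - hremi
end

section
/- Fix r ≥ 2. The core-quotient decomposition λ ↦ (core_r(λ), quot_r(λ)) is a bijection from the set of all partitions onto the product of the set of r-core partitions with the set of r-tuples of partitions. -/
/-- Two cells are (edge-)adjacent. -/
def Adj (a b : ℕ × ℕ) : Prop :=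
  (a.1 = b.1 ∧ (a.2 + 1 = b.2 ∨ b.2 + 1 = a.2)) ∨
  (a.2 = b.2 ∧ (a.1 + 1 = b.1 ∨ b.1 + 1 = a.1))

/-- A set of cells is connected (any two cells are joined by a path of
edge-adjacent cells inside the set). -/
def ConnectedCells (s : Set (ℕ × ℕ)) : Prop :=
  ∀ x ∈ s, ∀ y ∈ s, Relation.ReflTransGen (fun a b => Adj a b ∧ a ∈ s ∧ b ∈ s) x y

/-- `ν` is obtained from `μ` by removing a ribbon (rim hook) of length `r`:
the skew shape `μ/ν` has `r` cells, is connected, and contains no 2×2 square. -/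
def IsRibbonOf (r : ℕ) (μ ν : YoungDiagram) : Prop :=
  ν.cells ⊆ μ.cells ∧ (μ.cells \ ν.cells).card = r ∧
  ConnectedCells ((μ.cells : Set (ℕ × ℕ)) \ (ν.cells : Set (ℕ × ℕ))) ∧
  ∀ i j : ℕ, ¬ ((i, j) ∈ μ.cells \ ν.cells ∧ (i + 1, j) ∈ μ.cells \ ν.cells ∧
      (i, j + 1) ∈ μ.cells \ ν.cells ∧ (i + 1, j + 1) ∈ μ.cells \ ν.cells)

/-- An `r`-core is a partition with no removable ribbon of length `r`. -/
def IsRCore (r : ℕ) (μ : YoungDiagram) : Prop := ∀ ν, ¬ IsRibbonOf r μ ν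

/-- The beta-set of a partition. -/
def betaSet (μ : YoungDiagram) : Set ℤ :=
  {n | ∃ i : ℕ, n = (μ.rowLen i : ℤ) - (i + 1)}

/-- `ν` is the `r`-core of `μ`: it is reached from `μ` by successively
removing `r`-ribbons, and has no `r`-ribbon left. -/
def ReachesCore (r : ℕ) (μ ν : YoungDiagram) : Prop :=
  Relation.ReflTransGen (fun a b => IsRibbonOf r a b) μ ν ∧ IsRCore r ν

/-- The total size `|quot_r(μ)|` of the `r`-quotient of `μ`, read off from the
Maya diagram: it is the number of pairs `(s, t)` with `s` in the beta-set,
`t` not in the beta-set, `t < s` and `s ≡ t (mod r)`. -/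
noncomputable def quotTotal (r : ℕ) (μ : YoungDiagram) : ℕ :=
  {p : ℤ × ℤ | p.1 ∈ betaSet μ ∧ p.2 ∉ betaSet μ ∧ p.2 < p.1 ∧
    (r : ℤ) ∣ (p.1 - p.2)}.ncard

/-- The charge of the residue-`i` subdiagram of the Maya diagram with
black-bead set `S`: the number of black beads at positions `i + kr`, `k ≥ 0`,
minus the number of white beads at positions `i + kr`, `k < 0`. -/
noncomputable def charge (r : ℕ) (S : Set ℤ) (i : ℤ) : ℤ :=
  ({k : ℕ | i + (k : ℤ) * r ∈ S}.ncard : ℤ) -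
    ({k : ℕ | i - ((k : ℤ) + 1) * r ∉ S}.ncard : ℤ)

/-- `v` is the `r`-quotient of `μ`: the beta-set of the `i`-th component is the
residue-`i` subdiagram of the Maya diagram of `μ`, recentered by its charge. -/
def QuotRel (r : ℕ) (μ : YoungDiagram) (v : Fin r → YoungDiagram) : Prop :=
  ∀ i : Fin r,
    betaSet (v i) =
      {n : ℤ | (i : ℤ) + (n + charge r (betaSet μ) i) * r ∈ betaSet μ}

/-!
Encode a partition `λ` by its beta-set `{λ_i - i - 1}`, the bead set of its Maya diagram; the
Maya diagrams of partitions are exactly those of charge `0`. Removing an `r`-ribbon from `λ` is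
the same as sliding one bead `r` places down into a hole. On the `r`-abacus, whose runners are
the residue classes modulo `r`, this moves a bead one step down a single runner, so the charges
of the runners do not change. A partition is an `r`-core iff no bead can slide, i.e. iff every
runner is an initial segment `{k | k < c_i}`; hence an `r`-core is determined by its runner
charges, and all cores reached from `λ` coincide. The `r`-quotient records each runner shifted
by its charge, so core and quotient together determine every runner, hence `λ`. Conversely, the
runners built from an `r`-core and an `r`-tuple of partitions have charges summing to the
charge `0` of the core, so they form the Maya diagram of a partition.
-/

section

open Set

section BetaNumbers

def beta (μ : YoungDiagram) (i : ℕ) : ℤ := μ.rowLen i - (i + 1)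

theorem range_beta (μ : YoungDiagram) : range (beta μ) = betaSet μ := by
  ext n
  simp [betaSet, beta, eq_comm]

theorem beta_strictAnti (μ : YoungDiagram) : StrictAnti (beta μ) :=
  strictAnti_nat_of_succ_lt fun i => by
    have := μ.rowLen_anti i (i + 1) i.le_succ
    simp only [beta]
    omega

theorem rowLen_eq_zero_of_colLen_le (μ : YoungDiagram) {i : ℕ} (hi : μ.colLen 0 ≤ i) :
    μ.rowLen i = 0 := by
  by_contra h
  have := YoungDiagram.mem_iff_lt_colLen.1 (YoungDiagram.mem_iff_lt_rowLen.2 (Nat.pos_of_ne_zero h))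
  omega

theorem strictAnti_range_inj {f g : ℕ → ℤ} (hf : StrictAnti f) (hg : StrictAnti g) :
    range f = range g ↔ f = g :=
  StrictMono.range_inj (γ := ℤᵒᵈ) hf hg

theorem betaSet_injective : Function.Injective betaSet := fun μ ν h => by
  have hβ : beta μ = beta ν := (strictAnti_range_inj (beta_strictAnti μ) (beta_strictAnti ν)).1
    (by rw [range_beta, range_beta, h])
  ext ⟨i, j⟩
  have := congrFun hβ i
  simp only [beta] at this
  simp only [YoungDiagram.mem_cells, YoungDiagram.mem_iff_lt_rowLen]
  omega

theorem exists_rowLen_eq (f : ℕ → ℕ) (hf : Antitone f) (N : ℕ) (hN : ∀ i, N ≤ i → f i = 0) :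
    ∃ μ : YoungDiagram, ∀ i, μ.rowLen i = f i := by
  refine ⟨YoungDiagram.ofRowLens (List.ofFn fun i : Fin N => f i)
    (hf.comp_monotone Fin.val_strictMono.monotone).sortedGE_ofFn, fun i => ?_⟩
  refine eq_of_forall_lt_iff fun j => ?_
  rw [← YoungDiagram.mem_iff_lt_rowLen, YoungDiagram.mem_ofRowLens]
  rcases lt_or_ge i N with hi | hi
  · simp [hi]
  · simp [hN i hi, hi.not_gt]

end BetaNumbers

/-- Bead sets of Maya diagrams; `betaSet λ` is the bead set of the paper's `m(λ)`. -/
def IsMaya (S : Set ℤ) : Prop := (S ∩ Ici 0).Finite ∧ (Iio 0 \ S).Finite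

noncomputable def chargeAt (S : Set ℤ) (c : ℤ) : ℤ := (S ∩ Ici c).ncard - (Iio c \ S).ncard

noncomputable def mayaCharge (S : Set ℤ) : ℤ := chargeAt S 0

section Maya

variable {S L : Set ℤ}

theorem IsMaya.finite_inter_Ici (h : IsMaya S) (c : ℤ) : (S ∩ Ici c).Finite :=
  (h.1.union (finite_Ico c 0)).subset fun x ⟨hxS, hx⟩ => by
    by_cases h0 : 0 ≤ x
    · exact Or.inl ⟨hxS, h0⟩
    · exact Or.inr ⟨hx, not_le.1 h0⟩

theorem IsMaya.finite_Iio_sdiff (h : IsMaya S) (c : ℤ) : (Iio c \ S).Finite :=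
  (h.2.union (finite_Ico 0 c)).subset fun x ⟨hx, hxS⟩ => by
    by_cases h0 : x < 0
    · exact Or.inl ⟨h0, hxS⟩
    · exact Or.inr ⟨not_lt.1 h0, hx⟩

theorem IsMaya.exists_Iio_subset (h : IsMaya S) : ∃ m, Iio m ⊆ S := by
  obtain ⟨m, hm⟩ := h.2.bddBelow
  refine ⟨min m 0, fun x hx => ?_⟩
  by_contra hxS
  have := hm ⟨lt_of_lt_of_le hx (min_le_right m 0), hxS⟩
  simp only [mem_Iio, lt_min_iff] at hx
  omega

theorem IsMaya.exists_subset_Iic (h : IsMaya S) : ∃ b, S ⊆ Iic b := by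
  obtain ⟨b, hb⟩ := h.1.bddAbove
  refine ⟨max b 0, fun x hx => ?_⟩
  by_cases hx0 : 0 ≤ x
  · exact le_max_of_le_left (hb ⟨hx, hx0⟩)
  · exact le_max_of_le_right (not_le.1 hx0).le

theorem IsMaya.chargeAt_add_one (h : IsMaya S) (c : ℤ) :
    chargeAt S (c + 1) = chargeAt S c - 1 := by
  have hIci : Ici c = insert c (Ici (c + 1)) := by
    ext x
    simp only [mem_Ici, mem_insert_iff]
    omega
  have hIio : Iio (c + 1) = insert c (Iio c) := by
    ext x
    simp only [mem_Iio, mem_insert_iff]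
    omega
  have hc₁ : c ∉ S ∩ Ici (c + 1) := fun hc => by simp at hc
  have hc₂ : c ∉ Iio c \ S := fun hc => by simp at hc
  unfold chargeAt
  rw [hIci, hIio]
  by_cases hc : c ∈ S
  · rw [inter_insert_of_mem hc, insert_sdiff_of_mem _ hc,
      ncard_insert_of_notMem hc₁ (h.finite_inter_Ici _)]
    push_cast
    ring
  · rw [inter_insert_of_notMem hc, insert_sdiff_of_notMem _ hc,
      ncard_insert_of_notMem hc₂ (h.finite_Iio_sdiff _)]
    push_cast
    ring

theorem IsMaya.chargeAt_eq (h : IsMaya S) (c : ℤ) : chargeAt S c = mayaCharge S - c := by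
  induction c using Int.induction_on with
  | zero => simp [mayaCharge]
  | succ k ih => rw [h.chargeAt_add_one, ih]; ring
  | pred k ih =>
    have := h.chargeAt_add_one (-(k : ℤ) - 1)
    rw [sub_add_cancel, ih] at this
    omega

theorem IsMaya.insert_sdiff (h : IsMaya S) (s t : ℤ) : IsMaya (insert t (S \ {s})) :=
  ⟨(h.1.insert t).subset (by intro x; simp; tauto),
    (h.2.insert s).subset (by intro x; simp; tauto)⟩

theorem IsMaya.mayaCharge_insert_sdiff (h : IsMaya S) {s t : ℤ} (hts : t < s) (hs : s ∈ S)
    (ht : t ∉ S) : mayaCharge (insert t (S \ {s})) = mayaCharge S := by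
  have hbeads : insert t (S \ {s}) ∩ Ici t = insert t ((S ∩ Ici t) \ {s}) := by
    ext x
    simp only [mem_inter_iff, mem_insert_iff, mem_sdiff, mem_singleton_iff, mem_Ici]
    constructor
    · rintro ⟨rfl | hx, hxt⟩ <;> tauto
    · rintro (rfl | ⟨hx, hxs⟩) <;> tauto
  have hholes : Iio t \ insert t (S \ {s}) = Iio t \ S := by
    ext x
    simp only [mem_sdiff, mem_Iio, mem_insert_iff, mem_singleton_iff]
    constructor
    · rintro ⟨hx, hxS⟩
      exact ⟨hx, fun hxS' => hxS (Or.inr ⟨hxS', by omega⟩)⟩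
    · rintro ⟨hx, hxS⟩
      exact ⟨hx, by rintro (rfl | ⟨hxS', -⟩) <;> [omega; exact hxS hxS']⟩
  have hcard : (insert t (S \ {s}) ∩ Ici t).ncard = (S ∩ Ici t).ncard := by
    rw [hbeads, ncard_insert_of_notMem (fun ht' => ht ht'.1.1) ((h.finite_inter_Ici t).sdiff),
      ncard_sdiff_singleton_add_one (show s ∈ S ∩ Ici t from ⟨hs, hts.le⟩) (h.finite_inter_Ici t)]
  have := (h.insert_sdiff s t).chargeAt_eq t
  rw [chargeAt, hcard, hholes, ← chargeAt, h.chargeAt_eq] at this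
  omega

theorem IsMaya.preimage_sub (h : IsMaya L) (c : ℤ) : IsMaya {n | n - c ∈ L} := by
  have hinj (s : Set ℤ) : InjOn (· - c) ((· - c) ⁻¹' s) := fun _ _ _ _ hxy => sub_left_inj.1 hxy
  exact ⟨((h.finite_inter_Ici (-c)).preimage (hinj _)).subset
      fun x hx => ⟨hx.1, show -c ≤ x - c by linarith [show (0 : ℤ) ≤ x from hx.2]⟩,
    ((h.finite_Iio_sdiff (-c)).preimage (hinj _)).subset
      fun x hx => ⟨show x - c < -c by linarith [show x < 0 from hx.1], hx.2⟩⟩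

theorem IsMaya.mayaCharge_preimage_sub (h : IsMaya L) (c : ℤ) :
    mayaCharge {n | n - c ∈ L} = mayaCharge L + c := by
  have hinj : Function.Injective (· - c) := sub_left_injective
  have hsurj (s : Set ℤ) : s ⊆ range (· - c) := fun x _ => ⟨x + c, by simp⟩
  have hbeads : {n | n - c ∈ L} ∩ Ici 0 = (· - c) ⁻¹' (L ∩ Ici (-c)) := by
    ext x
    simp
  have hholes : Iio 0 \ {n | n - c ∈ L} = (· - c) ⁻¹' (Iio (-c) \ L) := by
    ext x
    simp
  rw [mayaCharge, chargeAt, hbeads, hholes,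
    ncard_preimage_of_injective_subset_range hinj (hsurj _),
    ncard_preimage_of_injective_subset_range hinj (hsurj _), ← chargeAt, h.chargeAt_eq,
    sub_neg_eq_add]

theorem isMaya_Iio (c : ℤ) : IsMaya (Iio c) :=
  ⟨(finite_Ico 0 c).subset fun x hx => ⟨hx.2, hx.1⟩, by simp⟩

theorem mayaCharge_Iio (c : ℤ) : mayaCharge (Iio c) = c := by
  have := (isMaya_Iio c).chargeAt_eq c
  simp only [chargeAt, Iio_inter_Ici, Ico_self, ncard_empty, sdiff_self] at this
  omega

theorem IsMaya.eq_Iio_of_sub_one_mem (h : IsMaya L) (hL : ∀ k ∈ L, k - 1 ∈ L) :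
    L = Iio (mayaCharge L) := by
  obtain ⟨m, hm⟩ := h.exists_Iio_subset
  obtain ⟨b, hb⟩ := h.exists_subset_Iic
  obtain ⟨G, hG, hGmax⟩ :=
    Int.exists_greatest_of_bdd ⟨b, fun z hz => hb hz⟩ ⟨m - 1, hm (sub_one_lt m)⟩
  suffices hLG : L = Iio (G + 1) by rw [hLG, mayaCharge_Iio]
  ext x
  refine ⟨fun hx => Int.lt_add_one_iff.2 (hGmax x hx), fun hx => ?_⟩
  induction x, Int.lt_add_one_iff.1 hx using Int.leInductionDown with
  | base => exact hG
  | pred n hn ih => exact hL n (ih (Int.lt_add_one_iff.2 hn))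

end Maya

section BetaSets

variable {S : Set ℤ} {g : ℕ → ℤ}

theorem antitone_add_of_strictAnti (hg : StrictAnti g) : Antitone fun n => g n + n :=
  antitone_nat_of_succ_le fun n => by
    have := hg (Nat.lt_add_one n)
    push_cast
    omega

theorem ncard_range_inter_Ioi (hg : StrictAnti g) (n : ℕ) : (range g ∩ Ioi (g n)).ncard = n := by
  have himage : range g ∩ Ioi (g n) = g '' ↑(Finset.range n) := by
    ext x
    constructor
    · rintro ⟨⟨m, rfl⟩, hm⟩
      exact ⟨m, by simpa using hg.lt_iff_gt.1 hm, rfl⟩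
    · rintro ⟨m, hm, rfl⟩
      exact ⟨⟨m, rfl⟩, hg (by simpa using hm)⟩
  rw [himage, ncard_image_of_injective _ hg.injective, ncard_coe_finset, Finset.card_range]

theorem IsMaya.mayaCharge_eq_of_range_eq (h : IsMaya S) (hg : StrictAnti g) (hS : range g = S) :
    ∃ N, ∀ n, N ≤ n → mayaCharge S = g n + n + 1 := by
  subst hS
  obtain ⟨m, hm⟩ := h.exists_Iio_subset
  refine ⟨(g 0 - m + 1).toNat, fun n hn => ?_⟩
  have hgn : g n < m := by
    have := antitone_add_of_strictAnti hg (Nat.zero_le n)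
    simp only at this
    omega
  have hholes : Iio (g n + 1) \ range g = ∅ :=
    sdiff_eq_empty.2 fun x hx => hm (by simp only [mem_Iio] at hx ⊢; omega)
  have := h.chargeAt_eq (g n + 1)
  rw [chargeAt, Ici_add_one_eq_Ioi, ncard_range_inter_Ioi hg, hholes, ncard_empty] at this
  omega

theorem isMaya_betaSet (μ : YoungDiagram) : IsMaya (betaSet μ) := by
  refine ⟨(finite_Icc 0 (beta μ 0)).subset ?_, (finite_Ico (-(μ.colLen 0 : ℤ)) 0).subset ?_⟩
  · rintro _ ⟨hx, hx0⟩
    rw [← range_beta] at hx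
    obtain ⟨i, rfl⟩ := hx
    exact ⟨hx0, (beta_strictAnti μ).antitone (Nat.zero_le i)⟩
  · rintro x ⟨hx0, hx⟩
    refine ⟨not_lt.1 fun hxN => hx ⟨(-x - 1).toNat, ?_⟩, hx0⟩
    rw [rowLen_eq_zero_of_colLen_le μ (by omega)]
    omega

theorem mayaCharge_betaSet (μ : YoungDiagram) : mayaCharge (betaSet μ) = 0 := by
  obtain ⟨N, hN⟩ :=
    (isMaya_betaSet μ).mayaCharge_eq_of_range_eq (beta_strictAnti μ) (range_beta μ)
  rw [hN (max N (μ.colLen 0)) (le_max_left _ _), beta,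
    rowLen_eq_zero_of_colLen_le μ (le_max_right _ _)]
  ring

theorem IsMaya.exists_strictAnti_range_eq (h : IsMaya S) :
    ∃ g : ℕ → ℤ, StrictAnti g ∧ range g = S := by
  obtain ⟨b, hb⟩ := h.exists_subset_Iic
  obtain ⟨m, hm⟩ := h.exists_Iio_subset
  set p : ℕ → Prop := fun n => b - n ∈ S
  have hp : {n | p n}.Infinite := (Ici_infinite (b - m + 1).toNat).mono fun n hn =>
    hm (by simp only [mem_Ici, mem_Iio] at hn ⊢; omega)
  refine ⟨fun n => b - Nat.nth p n, fun i j hij => by simpa using Nat.nth_strictMono hp hij, ?_⟩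
  ext x
  constructor
  · rintro ⟨n, rfl⟩
    exact Nat.nth_mem_of_infinite hp n
  · intro hx
    have hxb : x ≤ b := hb hx
    obtain ⟨n, hn⟩ : (b - x).toNat ∈ range (Nat.nth p) := by
      rw [Nat.range_nth_of_infinite hp]
      show b - _ ∈ S
      rwa [Int.toNat_of_nonneg (by omega), sub_sub_cancel]
    exact ⟨n, by simp only [hn]; omega⟩

theorem IsMaya.exists_betaSet_eq (h : IsMaya S) (h0 : mayaCharge S = 0) :
    ∃ μ : YoungDiagram, betaSet μ = S := by
  obtain ⟨g, hg, hgS⟩ := h.exists_strictAnti_range_eq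
  obtain ⟨N, hN⟩ := h.mayaCharge_eq_of_range_eq hg hgS
  have hpos (n : ℕ) : 0 ≤ g n + n + 1 := by
    have h₁ : g (max n N) + (max n N : ℕ) ≤ g n + n :=
      antitone_add_of_strictAnti hg (le_max_left n N)
    have h₂ := hN (max n N) (le_max_right n N)
    omega
  obtain ⟨μ, hμ⟩ := exists_rowLen_eq (fun n => (g n + n + 1).toNat)
    (fun m n hmn => by have := antitone_add_of_strictAnti hg hmn; simp only at this ⊢; omega) N
    (fun n hn => by have := hN n hn; omega)
  refine ⟨μ, ?_⟩
  rw [← range_beta, ← hgS]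
  congr 1
  funext n
  have := hpos n
  rw [beta, hμ]
  omega

end BetaSets

section Abacus

variable {r : ℕ} {S T : Set ℤ}

theorem exists_fin_add_mul_eq (r : ℕ) [NeZero r] (m : ℤ) :
    ∃ (i : Fin r) (k : ℤ), (i : ℤ) + k * r = m :=
  ⟨((Int.divModEquiv r) m).2, ((Int.divModEquiv r) m).1, by
    rw [add_comm, ← Int.divModEquiv_symm_apply, Equiv.symm_apply_apply]⟩

theorem fin_add_mul_inj [NeZero r] {i i' : Fin r} {k k' : ℤ} (h : (i : ℤ) + k * r = i' + k' * r) :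
    i = i' ∧ k = k' := by
  have := (Int.divModEquiv r).symm.injective (a₁ := (k, i)) (a₂ := (k', i'))
    (by simpa [add_comm] using h)
  simp only [Prod.mk.injEq] at this
  exact this.symm

theorem fin_add_mul_nonneg_iff (i : Fin r) (k : ℤ) : 0 ≤ (i : ℤ) + k * r ↔ 0 ≤ k := by
  have hi : (i : ℤ) < r := by exact_mod_cast i.2
  constructor <;> intro h
  · by_contra hk
    nlinarith
  · positivity

/-- The `i`-th runner of the `r`-abacus of `S`; for `0 ≤ i < r` the paper's `m_i`. -/
def runner (r : ℕ) (S : Set ℤ) (i : ℤ) : Set ℤ := {k | i + k * r ∈ S}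

theorem charge_eq_mayaCharge_runner (r : ℕ) (S : Set ℤ) (i : ℤ) :
    charge r S i = mayaCharge (runner r S i) := by
  have hbeads : {k : ℕ | i + (k : ℤ) * r ∈ S} = (↑) ⁻¹' (runner r S i ∩ Ici 0) := by
    ext k; simp [runner]
  have hholes : {k : ℕ | i - ((k : ℤ) + 1) * r ∉ S} =
      (fun k : ℕ => -((k : ℤ) + 1)) ⁻¹' (Iio 0 \ runner r S i) := by
    ext k
    simp only [mem_ofPred_eq, mem_preimage, mem_sdiff, mem_Iio, runner]
    rw [show i + -((k : ℤ) + 1) * r = i - ((k : ℤ) + 1) * r by ring]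
    exact ⟨fun h => ⟨by omega, h⟩, fun h => h.2⟩
  rw [charge, hbeads, hholes, ncard_preimage_of_injective_subset_range Nat.cast_injective,
    ncard_preimage_of_injective_subset_range (fun a b h => by simpa using h), mayaCharge, chargeAt]
  · rintro x ⟨hx, -⟩
    exact ⟨(-x - 1).toNat, by simp only [mem_Iio] at hx ⊢; omega⟩
  · rintro x ⟨-, hx⟩; exact ⟨x.toNat, Int.toNat_of_nonneg hx⟩

theorem iUnion_image_preimage_fin_add_mul (r : ℕ) [NeZero r] (A : Set ℤ) :
    ⋃ i : Fin r, (fun k : ℤ => (i : ℤ) + k * r) '' ((fun k : ℤ => (i : ℤ) + k * r) ⁻¹' A) = A := by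
  ext m
  simp only [mem_iUnion, mem_image, mem_preimage]
  constructor
  · rintro ⟨i, k, hk, rfl⟩
    exact hk
  · intro hm
    obtain ⟨i, k, rfl⟩ := exists_fin_add_mul_eq r m
    exact ⟨i, k, hm, rfl⟩

theorem ncard_eq_sum_ncard_preimage_fin_add_mul [NeZero r] {A : Set ℤ} (hA : A.Finite) :
    A.ncard = ∑ i : Fin r, ((fun k : ℤ => (i : ℤ) + k * r) ⁻¹' A).ncard := by
  have hinj (i : Fin r) : Function.Injective fun k : ℤ => (i : ℤ) + k * r :=
    fun _ _ h => (fin_add_mul_inj h).2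
  conv_lhs => rw [← iUnion_image_preimage_fin_add_mul r A]
  rw [ncard_iUnion_of_finite, finsum_eq_sum_of_fintype]
  · simp_rw [ncard_image_of_injective _ (hinj _)]
  · exact fun i => (hA.preimage (hinj i).injOn).image _
  · intro i j hij
    refine disjoint_left.2 ?_
    rintro _ ⟨k, -, rfl⟩ ⟨k', -, h⟩
    exact hij (fin_add_mul_inj h).1.symm

theorem runner_inter_Ici_zero (S : Set ℤ) (i : Fin r) :
    runner r S i ∩ Ici 0 = (fun k : ℤ => (i : ℤ) + k * r) ⁻¹' (S ∩ Ici 0) := by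
  ext k
  simp [runner, fin_add_mul_nonneg_iff]

theorem Iio_zero_sdiff_runner (S : Set ℤ) (i : Fin r) :
    Iio 0 \ runner r S i = (fun k : ℤ => (i : ℤ) + k * r) ⁻¹' (Iio 0 \ S) := by
  ext k
  simp only [mem_sdiff, mem_Iio, mem_preimage, runner, mem_ofPred_eq, ← not_le,
    fin_add_mul_nonneg_iff]

theorem isMaya_runner [NeZero r] (h : IsMaya S) (i : ℤ) : IsMaya (runner r S i) := by
  have hinj (s : Set ℤ) : InjOn (fun k : ℤ => i + k * r) ((fun k : ℤ => i + k * r) ⁻¹' s) :=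
    fun _ _ _ _ h => mul_right_cancel₀ (Nat.cast_ne_zero.2 (NeZero.ne r)) (add_left_cancel h)
  refine ⟨((h.finite_inter_Ici i).preimage (hinj _)).subset fun k ⟨hk, hk0⟩ => ⟨hk, ?_⟩,
    ((h.finite_Iio_sdiff i).preimage (hinj _)).subset fun k ⟨hk0, hk⟩ => ⟨?_, hk⟩⟩
  · simp only [mem_Ici] at hk0 ⊢
    nlinarith
  · simp only [mem_Iio] at hk0 ⊢
    nlinarith [(Nat.cast_pos.2 (Nat.pos_of_ne_zero (NeZero.ne r)) : (0 : ℤ) < r)]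

theorem isMaya_of_runner [NeZero r] (h : ∀ i : Fin r, IsMaya (runner r S i)) : IsMaya S := by
  constructor
  · rw [← iUnion_image_preimage_fin_add_mul r (S ∩ Ici 0)]
    exact finite_iUnion fun i => by rw [← runner_inter_Ici_zero]; exact (h i).1.image _
  · rw [← iUnion_image_preimage_fin_add_mul r (Iio 0 \ S)]
    exact finite_iUnion fun i => by rw [← Iio_zero_sdiff_runner]; exact (h i).2.image _

theorem IsMaya.mayaCharge_eq_sum [NeZero r] (h : IsMaya S) :
    mayaCharge S = ∑ i : Fin r, mayaCharge (runner r S i) := by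
  simp only [mayaCharge, chargeAt, runner_inter_Ici_zero, Iio_zero_sdiff_runner,
    Finset.sum_sub_distrib, ← Nat.cast_sum, ← ncard_eq_sum_ncard_preimage_fin_add_mul h.1,
    ← ncard_eq_sum_ncard_preimage_fin_add_mul h.2]

theorem eq_of_runner_eq [NeZero r] (h : ∀ i : Fin r, runner r S i = runner r T i) : S = T := by
  ext m
  obtain ⟨i, k, rfl⟩ := exists_fin_add_mul_eq r m
  exact Set.ext_iff.1 (h i) k

theorem exists_runner_eq [NeZero r] (L : Fin r → Set ℤ) :
    ∃ S : Set ℤ, ∀ i : Fin r, runner r S i = L i := by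
  refine ⟨{m | ∃ (i : Fin r) (k : ℤ), (i : ℤ) + k * r = m ∧ k ∈ L i}, fun i => ?_⟩
  ext k
  constructor
  · rintro ⟨i', k', h, hk'⟩
    obtain ⟨rfl, rfl⟩ := fin_add_mul_inj h
    exact hk'
  · exact fun hk => ⟨i, k, rfl, hk⟩

/-- Sliding a bead `r` steps down moves it one step down its own runner and leaves every other
runner untouched. -/
theorem IsMaya.mayaCharge_runner_insert_sdiff [NeZero r] (h : IsMaya S) {s : ℤ} (hs : s ∈ S)
    (hsr : s - r ∉ S) (i : ℤ) :
    mayaCharge (runner r (insert (s - r) (S \ {s})) i) = mayaCharge (runner r S i) := by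
  have hr : (r : ℤ) ≠ 0 := Nat.cast_ne_zero.2 (NeZero.ne r)
  by_cases hon : ∃ k, i + k * r = s
  · obtain ⟨k, rfl⟩ := hon
    have hmoved : runner r (insert (i + k * r - r) (S \ {i + k * r})) i =
        insert (k - 1) (runner r S i \ {k}) := by
      ext k'
      simp only [runner, mem_ofPred_eq, mem_insert_iff, mem_sdiff, mem_singleton_iff]
      rw [show i + k * r - r = i + (k - 1) * r by ring]
      simp only [add_right_inj, mul_left_inj' hr]
    rw [hmoved]
    exact (isMaya_runner h i).mayaCharge_insert_sdiff (by omega) hs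
      (by simpa [runner, sub_mul, add_sub_assoc] using hsr)
  · push Not at hon
    congr 1
    ext k'
    simp only [runner, mem_ofPred_eq, mem_insert_iff, mem_sdiff, mem_singleton_iff]
    have hne : i + k' * r ≠ s - r := fun he =>
      hon (k' + 1) (by rw [add_mul, ← add_assoc, he]; ring)
    simp only [hne, hon k', false_or, not_false_eq_true, and_true]

def IsPacked (r : ℕ) (S : Set ℤ) : Prop := ∀ s ∈ S, s - r ∈ S

theorem IsPacked.runner_eq_Iio [NeZero r] (hp : IsPacked r S) (h : IsMaya S) (i : ℤ) :
    runner r S i = Iio (mayaCharge (runner r S i)) :=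
  (isMaya_runner h i).eq_Iio_of_sub_one_mem fun k hk => by
    simpa only [runner, mem_ofPred_eq, sub_mul, one_mul, add_sub_assoc] using hp _ hk

theorem IsPacked.eq_of_mayaCharge_runner_eq [NeZero r] (hpS : IsPacked r S) (hpT : IsPacked r T)
    (hS : IsMaya S) (hT : IsMaya T)
    (h : ∀ i : Fin r, mayaCharge (runner r S i) = mayaCharge (runner r T i)) : S = T :=
  eq_of_runner_eq fun i => by rw [hpS.runner_eq_Iio hS, hpT.runner_eq_Iio hT, h]

end Abacus

section Sequences

variable {g h : ℕ → ℤ} {a b : ℕ} {t : ℤ}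

theorem range_eq_insert_sdiff (hg : StrictAnti g) (hab : a ≤ b) (h_lt : ∀ i < a, h i = g i)
    (h_gt : ∀ i, b < i → h i = g i) (h_mid : ∀ i, a ≤ i → i < b → h i = g (i + 1)) :
    range h = insert (h b) (range g \ {g a}) := by
  ext x
  simp only [mem_insert_iff, mem_sdiff, mem_range, mem_singleton_iff]
  constructor
  · rintro ⟨i, rfl⟩
    rcases lt_or_ge i a with hia | hai
    · exact Or.inr ⟨⟨i, (h_lt i hia).symm⟩, by rw [h_lt i hia]; exact hg.injective.ne hia.ne⟩
    rcases lt_trichotomy i b with hib | rfl | hbi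
    · exact Or.inr ⟨⟨i + 1, (h_mid i hai hib).symm⟩,
        by rw [h_mid i hai hib]; exact hg.injective.ne (by omega)⟩
    · exact Or.inl rfl
    · exact Or.inr ⟨⟨i, (h_gt i hbi).symm⟩,
        by rw [h_gt i hbi]; exact hg.injective.ne (by omega)⟩
  · rintro (rfl | ⟨⟨k, rfl⟩, hk⟩)
    · exact ⟨b, rfl⟩
    have hka : k ≠ a := fun hka => hk (by rw [hka])
    rcases lt_or_ge k a with hka' | hak
    · exact ⟨k, h_lt k hka'⟩
    rcases le_or_gt k b with hkb | hbk
    · exact ⟨k - 1, by rw [h_mid (k - 1) (by omega) (by omega), Nat.sub_add_cancel (by omega)]⟩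
    · exact ⟨k, h_gt k hbk⟩

theorem notMem_range_of_lt (hg : StrictAnti g) (hh : StrictAnti h)
    (h_gt : ∀ i, b < i → h i = g i) (hb : h b < g b) : h b ∉ range g := by
  rintro ⟨k, hk⟩
  have hbk : b < k := hg.lt_iff_gt.1 (hk ▸ hb)
  exact hbk.ne' (hh.injective (by rw [h_gt k hbk, hk]))

theorem exists_lt_apply_of_lt (hg : StrictAnti g) (ht : t ∉ range g) (hta : t < g a) :
    ∃ b, a ≤ b ∧ t < g b ∧ g (b + 1) < t := by
  classical
  have hex : ∃ n, g n < t := ⟨(g 0 - t + 1).toNat, by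
    have := antitone_add_of_strictAnti hg (Nat.zero_le (g 0 - t + 1).toNat)
    simp only at this
    omega⟩
  have han : a < Nat.find hex := by
    by_contra han
    have := hg.antitone (not_lt.1 han)
    have := Nat.find_spec hex
    omega
  refine ⟨Nat.find hex - 1, by omega, lt_of_le_of_ne (not_lt.1 (Nat.find_min hex (by omega)))
    fun h => ht ⟨_, h.symm⟩, by rw [Nat.sub_add_cancel (by omega)]; exact Nat.find_spec hex⟩

/-- `h` is `g` with the term `g a` removed and `t` inserted in position `b`. -/
theorem eq_of_range_eq_insert_sdiff (hg : StrictAnti g) (hh : StrictAnti h) (hab : a ≤ b)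
    (hb : t < g b) (hb₁ : g (b + 1) < t) (hrange : range h = insert t (range g \ {g a})) :
    h = fun i => if i < a then g i else if i < b then g (i + 1) else if i = b then t else g i := by
  set h' : ℕ → ℤ := fun i =>
    if i < a then g i else if i < b then g (i + 1) else if i = b then t else g i
  have hbelow {i : ℕ} (hbi : b < i) : g i < t := (hg.antitone hbi).trans_lt hb₁
  have habove {i : ℕ} (hib : i ≤ b) : t < g i := hb.trans_le (hg.antitone hib)
  have hh' : StrictAnti h' := strictAnti_nat_of_succ_lt fun i => by
    simp only [h']
    split_ifs <;> first
      | exact hg (by omega)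
      | exact habove (by omega)
      | exact hbelow (by omega)
      | omega
  have hh'b : h' b = t := by
    simp only [h']
    split_ifs <;> omega
  refine (strictAnti_range_inj hh hh').1 ?_
  rw [hrange, range_eq_insert_sdiff (h := h') hg hab, hh'b] <;> intro i <;> simp only [h'] <;>
    intros <;> split_ifs <;> omega

end Sequences

theorem Adj.symm {x y : ℕ × ℕ} (h : Adj x y) : Adj y x := by
  unfold Adj at *
  omega

section CellPaths

variable {s : Set (ℕ × ℕ)}

theorem connectedCells_of_forall_reflTransGen (x₀ : ℕ × ℕ)
    (h : ∀ x ∈ s, Relation.ReflTransGen (fun x y => Adj x y ∧ x ∈ s ∧ y ∈ s) x x₀) :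
    ConnectedCells s := by
  have hsymm {x y : ℕ × ℕ}
      (hxy : Relation.ReflTransGen (fun x y => Adj x y ∧ x ∈ s ∧ y ∈ s) x y) :
      Relation.ReflTransGen (fun x y => Adj x y ∧ x ∈ s ∧ y ∈ s) y x := by
    induction hxy with
    | refl => rfl
    | tail _ hst ih => exact .head ⟨hst.1.symm, hst.2.2, hst.2.1⟩ ih
  exact fun x hx y hy => (h x hx).trans (hsymm (h y hy))

theorem exists_vertical_of_reflTransGen {x y : ℕ × ℕ}
    (hxy : Relation.ReflTransGen (fun x y => Adj x y ∧ x ∈ s ∧ y ∈ s) x y) {i : ℕ}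
    (hxi : x.1 ≤ i) (hiy : i < y.1) : ∃ j, (i, j) ∈ s ∧ (i + 1, j) ∈ s := by
  induction hxy with
  | refl => omega
  | @tail z w _ hzw ih =>
    by_cases hiz : i < z.1
    · exact ih hiz
    obtain ⟨z₁, z₂⟩ := z
    obtain ⟨w₁, w₂⟩ := w
    obtain ⟨⟨hrow, -⟩ | ⟨rfl, hcol⟩, hz, hw⟩ := hzw
    · simp only at hrow hiz hiy
      omega
    · simp only at hcol hiz hiy
      obtain rfl : i = z₁ := by omega
      obtain rfl : w₁ = i + 1 := by omega
      exact ⟨z₂, hz, hw⟩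

end CellPaths

section RimHooks

variable {μ ν : YoungDiagram} {a b i j : ℕ}

theorem mem_cells_sdiff : (i, j) ∈ μ.cells \ ν.cells ↔ ν.rowLen i ≤ j ∧ j < μ.rowLen i := by
  simp only [Finset.mem_sdiff, YoungDiagram.mem_cells, YoungDiagram.mem_iff_lt_rowLen, not_lt]
  exact and_comm

theorem mem_coe_cells_sdiff :
    (i, j) ∈ (μ.cells : Set (ℕ × ℕ)) \ (ν.cells : Set (ℕ × ℕ)) ↔
      ν.rowLen i ≤ j ∧ j < μ.rowLen i := by
  rw [← Finset.coe_sdiff, Finset.mem_coe, mem_cells_sdiff]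

/-- `μ / ν` is a rim hook occupying the rows `a` to `b`: `beta μ a` is removed and `beta ν b`
inserted. In rows, `beta ν i = beta μ (i + 1)` says that rows `i` and `i + 1` of `μ / ν` overlap
in exactly one column. -/
structure IsRimHook (μ ν : YoungDiagram) (a b : ℕ) : Prop where
  le : a ≤ b
  beta_of_lt : ∀ i < a, beta ν i = beta μ i
  beta_of_gt : ∀ i, b < i → beta ν i = beta μ i
  beta_of_mem_Ico : ∀ i, a ≤ i → i < b → beta ν i = beta μ (i + 1)
  beta_lt : beta ν b < beta μ b

namespace IsRimHook

theorem of_rowLen (hab : a ≤ b) (h_lt : ∀ i < a, ν.rowLen i = μ.rowLen i)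
    (h_gt : ∀ i, b < i → ν.rowLen i = μ.rowLen i)
    (h_mid : ∀ i, a ≤ i → i < b → ν.rowLen i + 1 = μ.rowLen (i + 1))
    (hb : ν.rowLen b < μ.rowLen b) : IsRimHook μ ν a b where
  le := hab
  beta_of_lt i hi := by simp only [beta, h_lt i hi]
  beta_of_gt i hi := by simp only [beta, h_gt i hi]
  beta_of_mem_Ico i hai hib := by
    have := h_mid i hai hib
    simp only [beta]
    push_cast
    omega
  beta_lt := by
    simp only [beta]
    omega

theorem rowLen_of_lt (H : IsRimHook μ ν a b) (hi : i < a) : ν.rowLen i = μ.rowLen i := by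
  have := H.beta_of_lt i hi
  simp only [beta] at this
  omega

theorem rowLen_of_gt (H : IsRimHook μ ν a b) (hi : b < i) : ν.rowLen i = μ.rowLen i := by
  have := H.beta_of_gt i hi
  simp only [beta] at this
  omega

theorem rowLen_add_one (H : IsRimHook μ ν a b) (hai : a ≤ i) (hib : i < b) :
    ν.rowLen i + 1 = μ.rowLen (i + 1) := by
  have := H.beta_of_mem_Ico i hai hib
  simp only [beta] at this
  push_cast at this
  omega

theorem rowLen_lt (H : IsRimHook μ ν a b) (hai : a ≤ i) (hib : i ≤ b) :
    ν.rowLen i < μ.rowLen i := by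
  rcases hib.lt_or_eq with hib | rfl
  · have := H.rowLen_add_one hai hib
    have := μ.rowLen_anti i (i + 1) i.le_succ
    omega
  · have := H.beta_lt
    simp only [beta] at this
    omega

theorem rowLen_le (H : IsRimHook μ ν a b) (i : ℕ) : ν.rowLen i ≤ μ.rowLen i := by
  rcases lt_or_ge i a with hia | hai
  · exact (H.rowLen_of_lt hia).le
  rcases le_or_gt i b with hib | hbi
  · exact (H.rowLen_lt hai hib).le
  · exact (H.rowLen_of_gt hbi).le

theorem mem_Icc_of_rowLen_lt (H : IsRimHook μ ν a b) (h : ν.rowLen i < μ.rowLen i) :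
    a ≤ i ∧ i ≤ b := by
  by_contra hi
  rcases not_and_or.1 hi with hi | hi
  · exact h.ne (H.rowLen_of_lt (not_le.1 hi))
  · exact h.ne (H.rowLen_of_gt (not_le.1 hi))

theorem card_sdiff (H : IsRimHook μ ν a b) :
    ((μ.cells \ ν.cells).card : ℤ) = beta μ a - beta ν b := by
  have hcells : μ.cells \ ν.cells =
      (Finset.Icc a b).biUnion fun i => {i} ×ˢ Finset.Ico (ν.rowLen i) (μ.rowLen i) := by
    ext ⟨i, j⟩
    simp only [mem_cells_sdiff, Finset.mem_biUnion, Finset.mem_Icc, Finset.mem_product,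
      Finset.mem_singleton, Finset.mem_Ico]
    constructor
    · exact fun hij => ⟨i, H.mem_Icc_of_rowLen_lt (by omega), rfl, hij⟩
    · rintro ⟨i, -, rfl, hij⟩
      exact hij
  have hdisj : (Finset.Icc a b : Set ℕ).PairwiseDisjoint
      fun i => {i} ×ˢ Finset.Ico (ν.rowLen i) (μ.rowLen i) := fun i _ i' _ hii' =>
    Finset.disjoint_left.2 fun x hx hx' => hii' <|
      (Finset.mem_singleton.1 (Finset.mem_product.1 hx).1).symm.trans
        (Finset.mem_singleton.1 (Finset.mem_product.1 hx').1)
  rw [hcells, Finset.card_biUnion hdisj, Nat.cast_sum]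
  calc ∑ i ∈ Finset.Icc a b, (({i} ×ˢ Finset.Ico (ν.rowLen i) (μ.rowLen i)).card : ℤ)
      = ∑ i ∈ Finset.Icc a b, (beta μ i - beta ν i) := Finset.sum_congr rfl fun i _ => by
        rw [Finset.card_product, Finset.card_singleton, one_mul, Nat.card_Ico,
          Nat.cast_sub (H.rowLen_le i), beta, beta]
        ring
    _ = ∑ i ∈ Finset.Ico a b, (beta μ i - beta μ (i + 1)) + (beta μ b - beta ν b) := by
        rw [← Finset.Ico_add_one_right_eq_Icc, Finset.sum_Ico_succ_top H.le]
        congr 1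
        exact Finset.sum_congr rfl fun i hi => by
          rw [H.beta_of_mem_Ico i (Finset.mem_Ico.1 hi).1 (Finset.mem_Ico.1 hi).2]
    _ = beta μ a - beta ν b := by
        have := Finset.sum_Ico_sub (fun i => -beta μ i) H.le
        simp only [sub_neg_eq_add, neg_add_eq_sub] at this
        rw [this]
        ring

theorem connectedCells (H : IsRimHook μ ν a b) :
    ConnectedCells ((μ.cells : Set (ℕ × ℕ)) \ (ν.cells : Set (ℕ × ℕ))) := by
  set D : Set (ℕ × ℕ) := (μ.cells : Set (ℕ × ℕ)) \ (ν.cells : Set (ℕ × ℕ))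
  have hrow (i j : ℕ) (hij : (i, j) ∈ D) :
      Relation.ReflTransGen (fun x y => Adj x y ∧ x ∈ D ∧ y ∈ D) (i, j) (i, ν.rowLen i) := by
    obtain ⟨h₁, h₂⟩ := mem_coe_cells_sdiff.1 hij
    induction j, h₁ using Nat.le_induction with
    | base => rfl
    | succ j hj ih =>
      have hj' : (i, j) ∈ D := mem_coe_cells_sdiff.2 ⟨hj, by omega⟩
      exact .head (b := (i, j)) ⟨Or.inl ⟨rfl, Or.inr rfl⟩, hij, hj'⟩ (ih hj' (by omega))
  have hcol (d i : ℕ) (hd : b - i = d) (hai : a ≤ i) (hib : i ≤ b) :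
      Relation.ReflTransGen (fun x y => Adj x y ∧ x ∈ D ∧ y ∈ D)
        (i, ν.rowLen i) (b, ν.rowLen b) := by
    induction d generalizing i with
    | zero =>
      obtain rfl : i = b := by omega
      rfl
    | succ d ih =>
      have h₁ := H.rowLen_add_one hai (by omega)
      have h₂ := ν.rowLen_anti i (i + 1) i.le_succ
      have hdown : (i + 1, ν.rowLen i) ∈ D := mem_coe_cells_sdiff.2 ⟨h₂, by omega⟩
      exact .head (b := (i + 1, ν.rowLen i))
        ⟨Or.inr ⟨rfl, Or.inl rfl⟩, mem_coe_cells_sdiff.2 ⟨le_rfl, H.rowLen_lt hai hib⟩, hdown⟩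
        ((hrow _ _ hdown).trans (ih (i + 1) (by omega) (by omega) (by omega)))
  refine connectedCells_of_forall_reflTransGen (b, ν.rowLen b) fun ⟨i, j⟩ hij => ?_
  obtain ⟨hai, hib⟩ :=
    H.mem_Icc_of_rowLen_lt (i := i) (by have := mem_coe_cells_sdiff.1 hij; omega)
  exact (hrow i j hij).trans (hcol _ i rfl hai hib)

theorem not_square (H : IsRimHook μ ν a b) (i j : ℕ) :
    ¬ ((i, j) ∈ μ.cells \ ν.cells ∧ (i + 1, j) ∈ μ.cells \ ν.cells ∧
      (i, j + 1) ∈ μ.cells \ ν.cells ∧ (i + 1, j + 1) ∈ μ.cells \ ν.cells) := by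
  rintro ⟨h₁, -, -, h₄⟩
  rw [mem_cells_sdiff] at h₁ h₄
  have hai := (H.mem_Icc_of_rowLen_lt (i := i) (by omega)).1
  have hib := (H.mem_Icc_of_rowLen_lt (i := i + 1) (by omega)).2
  have := H.rowLen_add_one hai (by omega)
  omega

theorem isRibbonOf (H : IsRimHook μ ν a b) : IsRibbonOf (μ.cells \ ν.cells).card μ ν := by
  refine ⟨fun ⟨i, j⟩ hij => ?_, rfl, H.connectedCells, H.not_square⟩
  rw [YoungDiagram.mem_cells, YoungDiagram.mem_iff_lt_rowLen] at hij ⊢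
  exact hij.trans_le (H.rowLen_le i)

end IsRimHook

theorem IsRibbonOf.rowLen_le {r : ℕ} (h : IsRibbonOf r μ ν) (i : ℕ) :
    ν.rowLen i ≤ μ.rowLen i := by
  by_contra hi
  have := YoungDiagram.mem_iff_lt_rowLen.1 ((YoungDiagram.mem_cells _).1 (h.1
    ((YoungDiagram.mem_cells _).2 (YoungDiagram.mem_iff_lt_rowLen.2 (not_le.1 hi)))))
  omega

/-- A path in `μ / ν` from row `a` to row `b` has to pass from row `i` to row `i + 1`, and
without a `2 × 2` square the two rows can share only one column. -/
theorem IsRibbonOf.rowLen_add_one {r : ℕ} (h : IsRibbonOf r μ ν) (ha : ν.rowLen a < μ.rowLen a)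
    (hb : ν.rowLen b < μ.rowLen b) (hai : a ≤ i) (hib : i < b) :
    ν.rowLen i + 1 = μ.rowLen (i + 1) := by
  obtain ⟨-, -, hconn, hsquare⟩ := h
  obtain ⟨j, hj₁, hj₂⟩ := exists_vertical_of_reflTransGen
    (hconn _ (mem_coe_cells_sdiff.2 ⟨le_rfl, ha⟩) _ (mem_coe_cells_sdiff.2 ⟨le_rfl, hb⟩)) hai hib
  rw [mem_coe_cells_sdiff] at hj₁ hj₂
  refine le_antisymm (by omega) (not_lt.1 fun hgap => hsquare i (ν.rowLen i) ?_)
  have := ν.rowLen_anti i (i + 1) i.le_succ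
  have := μ.rowLen_anti i (i + 1) i.le_succ
  simp only [mem_cells_sdiff]
  omega

theorem IsRibbonOf.exists_isRimHook {r : ℕ} [NeZero r] (h : IsRibbonOf r μ ν) :
    ∃ a b, IsRimHook μ ν a b := by
  classical
  set R := (Finset.range (μ.colLen 0)).filter fun i => ν.rowLen i < μ.rowLen i
  have hR {i : ℕ} : i ∈ R ↔ ν.rowLen i < μ.rowLen i := by
    simp only [R, Finset.mem_filter, Finset.mem_range, and_iff_right_iff_imp]
    intro hi
    by_contra hi'
    rw [rowLen_eq_zero_of_colLen_le μ (not_lt.1 hi')] at hi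
    omega
  obtain ⟨⟨i₀, j₀⟩, h₀⟩ := Finset.card_pos.1 (h.2.1 ▸ Nat.pos_of_ne_zero (NeZero.ne r))
  have hRne : R.Nonempty := ⟨i₀, hR.2 (by rw [mem_cells_sdiff] at h₀; omega)⟩
  have ha := hR.1 (R.min'_mem hRne)
  have hb := hR.1 (R.max'_mem hRne)
  have hout {i : ℕ} (hi : i < R.min' hRne ∨ R.max' hRne < i) : ν.rowLen i = μ.rowLen i := by
    refine le_antisymm (h.rowLen_le i) (not_lt.1 fun hi' => ?_)
    rcases hi with hi | hi
    · exact (R.min'_le i (hR.2 hi')).not_gt hi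
    · exact (R.le_max' i (hR.2 hi')).not_gt hi
  exact ⟨_, _, .of_rowLen (R.min'_le _ (R.max'_mem hRne)) (fun i hi => hout (Or.inl hi))
    (fun i hi => hout (Or.inr hi)) (fun i hai hib => h.rowLen_add_one ha hb hai hib) hb⟩

theorem exists_isRimHook_of_betaSet_eq {s t : ℤ} (hs : s ∈ betaSet μ) (ht : t ∉ betaSet μ)
    (hts : t < s) (hν : betaSet ν = insert t (betaSet μ \ {s})) :
    ∃ a b, IsRimHook μ ν a b ∧ beta μ a = s ∧ beta ν b = t := by
  simp only [← range_beta] at hs ht hν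
  obtain ⟨a, rfl⟩ := hs
  obtain ⟨b, hab, hb, hb₁⟩ := exists_lt_apply_of_lt (beta_strictAnti μ) ht hts
  have hβ := eq_of_range_eq_insert_sdiff (beta_strictAnti μ) (beta_strictAnti ν) hab hb hb₁ hν
  refine ⟨a, b, ⟨hab, ?_, ?_, ?_, ?_⟩, rfl, ?_⟩ <;> simp only [hβ] <;> intros <;>
    split_ifs <;> omega

theorem isRibbonOf_iff_betaSet_eq {r : ℕ} [NeZero r] :
    IsRibbonOf r μ ν ↔ ∃ s ∈ betaSet μ, s - r ∉ betaSet μ ∧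
      betaSet ν = insert (s - r) (betaSet μ \ {s}) := by
  constructor
  · intro h
    obtain ⟨a, b, H⟩ := h.exists_isRimHook
    have hb : beta ν b = beta μ a - r := by
      have := H.card_sdiff
      rw [h.2.1] at this
      omega
    have hnotMem :=
      notMem_range_of_lt (beta_strictAnti μ) (beta_strictAnti ν) H.beta_of_gt H.beta_lt
    have hrange := range_eq_insert_sdiff (beta_strictAnti μ) H.le H.beta_of_lt H.beta_of_gt
      H.beta_of_mem_Ico
    rw [range_beta, hb] at hnotMem
    rw [range_beta, range_beta, hb] at hrange
    exact ⟨beta μ a, range_beta μ ▸ mem_range_self a, hnotMem, hrange⟩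
  · rintro ⟨s, hs, hsr, hν⟩
    obtain ⟨a, b, H, rfl, hb⟩ :=
      exists_isRimHook_of_betaSet_eq hs hsr (by have := NeZero.pos r; omega) hν
    have hcard : (μ.cells \ ν.cells).card = r := by
      have := H.card_sdiff
      omega
    exact hcard ▸ H.isRibbonOf

end RimHooks

section Cores

variable {r : ℕ} [NeZero r] {μ ν c c' : YoungDiagram}

theorem IsRibbonOf.card_lt (h : IsRibbonOf r μ ν) : ν.cells.card < μ.cells.card := by
  have := Finset.card_sdiff_of_subset h.1
  have := Finset.card_le_card h.1
  have := NeZero.pos r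
  have := h.2.1
  omega

theorem IsRibbonOf.charge_eq (h : IsRibbonOf r μ ν) (i : ℤ) :
    charge r (betaSet ν) i = charge r (betaSet μ) i := by
  obtain ⟨s, hs, hsr, hν⟩ := isRibbonOf_iff_betaSet_eq.1 h
  rw [charge_eq_mayaCharge_runner, charge_eq_mayaCharge_runner, hν]
  exact (isMaya_betaSet μ).mayaCharge_runner_insert_sdiff hs hsr i

theorem ReachesCore.charge_eq (h : ReachesCore r μ c) (i : ℤ) :
    charge r (betaSet c) i = charge r (betaSet μ) i := by
  obtain ⟨hchain, -⟩ := h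
  induction hchain with
  | refl => rfl
  | tail _ hst ih => rw [hst.charge_eq, ih]

theorem isRCore_iff_isPacked : IsRCore r μ ↔ IsPacked r (betaSet μ) := by
  constructor
  · intro hcore s hs
    by_contra hsr
    obtain ⟨ν, hν⟩ := ((isMaya_betaSet μ).insert_sdiff s (s - r)).exists_betaSet_eq (by
      rw [(isMaya_betaSet μ).mayaCharge_insert_sdiff (by have := NeZero.pos r; omega) hs hsr,
        mayaCharge_betaSet])
    exact hcore ν (isRibbonOf_iff_betaSet_eq.2 ⟨s, hs, hsr, hν⟩)
  · intro hp ν h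
    obtain ⟨s, hs, hsr, -⟩ := isRibbonOf_iff_betaSet_eq.1 h
    exact hsr (hp s hs)

theorem IsRCore.eq_of_charge_eq (hc : IsRCore r c) (hc' : IsRCore r c')
    (h : ∀ i : Fin r, charge r (betaSet c) i = charge r (betaSet c') i) : c = c' :=
  betaSet_injective <| (isRCore_iff_isPacked.1 hc).eq_of_mayaCharge_runner_eq
    (isRCore_iff_isPacked.1 hc') (isMaya_betaSet c) (isMaya_betaSet c')
    (by simpa only [charge_eq_mayaCharge_runner] using h)

theorem exists_reachesCore (μ : YoungDiagram) : ∃ c, ReachesCore r μ c := by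
  induction hn : μ.cells.card using Nat.strong_induction_on generalizing μ with
  | _ n ih =>
    by_cases hμ : IsRCore r μ
    · exact ⟨μ, .refl, hμ⟩
    obtain ⟨ν, hν⟩ := not_forall_not.1 hμ
    obtain ⟨c, hνc, hc⟩ := ih _ (hn ▸ hν.card_lt) ν rfl
    exact ⟨c, .head hν hνc, hc⟩

theorem ReachesCore.unique (h : ReachesCore r μ c) (h' : ReachesCore r μ c') : c = c' :=
  h.2.eq_of_charge_eq h'.2 fun i => by rw [h.charge_eq, h'.charge_eq]

end Cores

section Quotients

variable {r : ℕ} {μ μ' c : YoungDiagram} {v v' : Fin r → YoungDiagram}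

theorem exists_quotRel [NeZero r] (μ : YoungDiagram) :
    ∃ v : Fin r → YoungDiagram, QuotRel r μ v := by
  have hrunner (i : Fin r) := isMaya_runner (r := r) (isMaya_betaSet μ) i
  choose v hv using fun i : Fin r =>
    ((hrunner i).preimage_sub (-charge r (betaSet μ) i)).exists_betaSet_eq (by
      rw [(hrunner i).mayaCharge_preimage_sub, charge_eq_mayaCharge_runner, add_neg_cancel])
  refine ⟨v, fun i => ?_⟩
  rw [hv i]
  simp only [sub_neg_eq_add]
  rfl

theorem QuotRel.unique (h : QuotRel r μ v) (h' : QuotRel r μ v') : v = v' :=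
  funext fun i => betaSet_injective ((h i).trans (h' i).symm)

theorem QuotRel.runner_eq (h : QuotRel r μ v) (i : Fin r) :
    runner r (betaSet μ) i = {k | k - charge r (betaSet μ) i ∈ betaSet (v i)} := by
  ext k
  rw [h i]
  simp only [runner, mem_ofPred_eq, sub_add_cancel]

theorem exists_runner_betaSet_eq [NeZero r] (v : Fin r → YoungDiagram) (γ : Fin r → ℤ)
    (hγ : ∑ i, γ i = 0) :
    ∃ μ : YoungDiagram, ∀ i : Fin r, runner r (betaSet μ) i = {k | k - γ i ∈ betaSet (v i)} := by
  obtain ⟨S, hS⟩ := exists_runner_eq fun i : Fin r => {k | k - γ i ∈ betaSet (v i)}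
  have hmaya (i : Fin r) : IsMaya (runner r S i) := hS i ▸ (isMaya_betaSet (v i)).preimage_sub _
  have hS₀ : mayaCharge S = 0 := by
    rw [(isMaya_of_runner hmaya).mayaCharge_eq_sum (r := r), ← hγ]
    refine Finset.sum_congr rfl fun i _ => ?_
    rw [hS i, (isMaya_betaSet (v i)).mayaCharge_preimage_sub, mayaCharge_betaSet, zero_add]
  obtain ⟨μ, rfl⟩ := (isMaya_of_runner hmaya).exists_betaSet_eq hS₀
  exact ⟨μ, hS⟩

theorem exists_reachesCore_quotRel [NeZero r] (hc : IsRCore r c) (v : Fin r → YoungDiagram) :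
    ∃ μ, ReachesCore r μ c ∧ QuotRel r μ v := by
  obtain ⟨μ, hμ⟩ := exists_runner_betaSet_eq v (fun i => charge r (betaSet c) i) (by
    simp only [charge_eq_mayaCharge_runner, ← (isMaya_betaSet c).mayaCharge_eq_sum,
      mayaCharge_betaSet])
  have hcharge (i : Fin r) : charge r (betaSet μ) i = charge r (betaSet c) i := by
    rw [charge_eq_mayaCharge_runner, hμ, (isMaya_betaSet (v i)).mayaCharge_preimage_sub,
      mayaCharge_betaSet, zero_add]
  obtain ⟨c', hc'⟩ := exists_reachesCore (r := r) μ
  refine ⟨μ, ?_, fun i => ?_⟩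
  · rwa [hc'.2.eq_of_charge_eq hc fun i => by rw [hc'.charge_eq, hcharge]] at hc'
  · ext n
    show n ∈ betaSet (v i) ↔ n + charge r (betaSet μ) i ∈ runner r (betaSet μ) i
    rw [hcharge, hμ, mem_ofPred_eq, add_sub_cancel_right]

theorem eq_of_reachesCore_of_quotRel [NeZero r] (h : ReachesCore r μ c ∧ QuotRel r μ v)
    (h' : ReachesCore r μ' c ∧ QuotRel r μ' v) : μ = μ' :=
  betaSet_injective <| eq_of_runner_eq fun i => by
    rw [h.2.runner_eq, h'.2.runner_eq, ← h.1.charge_eq, ← h'.1.charge_eq]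

end Quotients

end

/-- The core-quotient decomposition `λ ↦ (core_r(λ), quot_r(λ))` is a bijection
between partitions and pairs of an `r`-core and an `r`-tuple of partitions. -/
theorem core_quotient_bijection (r : ℕ) (hr : 2 ≤ r) :
    (∀ μ : YoungDiagram,
        ∃! p : YoungDiagram × (Fin r → YoungDiagram),
          ReachesCore r μ p.1 ∧ QuotRel r μ p.2) ∧
    (∀ c : YoungDiagram, IsRCore r c → ∀ v : Fin r → YoungDiagram,
        ∃! μ : YoungDiagram, ReachesCore r μ c ∧ QuotRel r μ v) := by
  have : NeZero r := ⟨by omega⟩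
  refine ⟨fun μ => ?_, fun c hc v => ?_⟩
  · obtain ⟨c, hc⟩ := exists_reachesCore (r := r) μ
    obtain ⟨v, hv⟩ := exists_quotRel (r := r) μ
    exact ⟨(c, v), ⟨hc, hv⟩, fun p hp => Prod.ext (hp.1.unique hc) (hp.2.unique hv)⟩
  · obtain ⟨μ, hμ⟩ := exists_reachesCore_quotRel hc v
    exact ⟨μ, hμ, fun μ' hμ' => eq_of_reachesCore_of_quotRel hμ' hμ⟩
end

section
/- Fix r ≥ 2 and a partition λ with charge vector (c_0, …, c_{r−1}). Let σλ be the partition whose residue Maya diagrams are the cyclic shift (m_{r−1}(λ), m_0(λ), …, m_{r−2}(λ)) of those of λ. Then λ and σλ have the same set of cells of color 0, i.e. {(a,b) ∈ λ : b ≡ a mod r} = {(a,b) ∈ σλ : b ≡ a mod r}. -/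
namespace CyclicShiftAux

/-- The beta sequence of a Young diagram. -/
noncomputable def beta (μ : YoungDiagram) (i : ℕ) : ℤ := (μ.rowLen i : ℤ) - (i + 1)

lemma beta_strictAnti (μ : YoungDiagram) : StrictAnti (beta μ) := by
  intro i j hij
  have h := μ.rowLen_anti i j hij.le
  unfold beta
  omega

lemma betaSet_eq (μ : YoungDiagram) : betaSet μ = Set.range (beta μ) := by
  ext x
  exact ⟨fun ⟨i, hi⟩ => ⟨i, hi.symm⟩, fun ⟨i, hi⟩ => ⟨i, hi.symm⟩⟩

/-- A finite downward-closed set of naturals is an initial segment. -/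
lemma mem_iff_lt_ncard {s : Set ℕ} (hfin : s.Finite)
    (hdc : ∀ ⦃i j : ℕ⦄, i ≤ j → j ∈ s → i ∈ s) (a : ℕ) :
    a ∈ s ↔ a < s.ncard := by
  have hne : sᶜ.Nonempty := (hfin.infinite_compl).nonempty
  set n := sInf sᶜ with hn
  have hnmem : n ∈ sᶜ := Nat.sInf_mem hne
  have hs : s = Set.Iio n := by
    ext i
    constructor
    · intro hi
      by_contra hni
      exact hnmem (hdc (by simpa [Set.mem_Iio] using hni) hi)
    · intro hi
      by_contra hns
      exact absurd (Nat.sInf_le (show i ∈ sᶜ from hns)) (not_le.mpr (Set.mem_Iio.mp hi))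
  have hcard : s.ncard = n := by
    rw [hs]
    have : (Set.Iio n : Set ℕ) = ↑(Finset.range n) := by
      ext; simp
    rw [this, Set.ncard_coe_finset, Finset.card_range]
  rw [hcard, hs, Set.mem_Iio]

/-- The key cell-membership criterion: `(a, b) ∈ μ` iff `a` is less than the
number of beta-set elements that are at least the content `b - a`. -/
lemma cell_mem_iff (μ : YoungDiagram) (a b : ℕ) :
    (a, b) ∈ μ ↔ a < {x ∈ betaSet μ | (b : ℤ) - a ≤ x}.ncard := by
  set c : ℤ := (b : ℤ) - a with hc
  set s : Set ℕ := {i | c ≤ beta μ i} with hs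
  have himg : {x ∈ betaSet μ | c ≤ x} = beta μ '' s := by
    rw [betaSet_eq]
    ext x
    constructor
    · rintro ⟨⟨i, rfl⟩, hcx⟩
      exact ⟨i, hcx, rfl⟩
    · rintro ⟨i, hi, rfl⟩
      exact ⟨⟨i, rfl⟩, hi⟩
  have hcard : {x ∈ betaSet μ | c ≤ x}.ncard = s.ncard := by
    rw [himg, Set.ncard_image_of_injOn ((beta_strictAnti μ).injective.injOn)]
  have hfin : s.Finite := by
    apply Set.Finite.subset (Set.finite_Iio ((μ.rowLen 0 : ℤ) - c).toNat)
    intro i hi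
    have h1 : c ≤ beta μ i := hi
    have h2 : (μ.rowLen i : ℤ) ≤ (μ.rowLen 0 : ℤ) := by
      exact_mod_cast μ.rowLen_anti 0 i (Nat.zero_le i)
    have : (i : ℤ) < (μ.rowLen 0 : ℤ) - c := by
      unfold beta at h1; omega
    simpa [Set.mem_Iio] using Int.lt_toNat.mpr this
  have hdc : ∀ ⦃i j : ℕ⦄, i ≤ j → j ∈ s → i ∈ s := by
    intro i j hij hj
    exact le_trans hj ((beta_strictAnti μ).antitone hij)
  rw [hcard, ← mem_iff_lt_ncard hfin hdc]
  have : (a, b) ∈ μ ↔ b < μ.rowLen a := YoungDiagram.mem_iff_lt_rowLen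
  rw [this]
  show b < μ.rowLen a ↔ c ≤ beta μ a
  unfold beta
  omega

lemma emod_sub_one (a n : ℤ) : (a % n - 1) % n = (a - 1) % n := by
  rw [Int.sub_emod, Int.emod_emod_of_dvd _ dvd_rfl, ← Int.sub_emod]

lemma emod_add_one (a n : ℤ) : (a % n + 1) % n = (a + 1) % n := by
  rw [Int.add_emod, Int.emod_emod_of_dvd _ dvd_rfl, ← Int.add_emod]

/-- Decomposition arithmetic: if `0 ≤ m < r` then `m + n*r` has remainder `m`
and quotient `n`. -/
lemma split_emod (r m n : ℤ) (h0 : 0 ≤ m) (h1 : m < r) :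
    (m + n * r) % r = m ∧ (m + n * r) / r = n := by
  constructor
  · rw [Int.add_mul_emod_self_right]
    exact Int.emod_eq_of_lt h0 h1
  · rw [Int.add_mul_ediv_right _ _ (by omega : r ≠ 0),
      Int.ediv_eq_zero_of_lt h0 h1, zero_add]

section Shift

variable (r : ℕ) (hr : 2 ≤ r) (lam nu : YoungDiagram)
    (hshift : ∀ i : Fin r, ∀ n : ℤ,
      ((i : ℤ) + n * r ∈ betaSet nu ↔
        ((i : ℤ) - 1) % (r : ℤ) + n * r ∈ betaSet lam))

include hr hshift

lemma key1 (x : ℤ) :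
    x ∈ betaSet nu ↔ (x % r - 1) % r + (x / r) * r ∈ betaSet lam := by
  have hrpos : (0 : ℤ) < r := by exact_mod_cast (by omega : 0 < r)
  have hi0 : 0 ≤ x % r := Int.emod_nonneg x (by omega)
  have hir : x % r < r := Int.emod_lt_of_pos x hrpos
  have hfin : (x % r).toNat < r := by omega
  have h := hshift ⟨(x % r).toNat, hfin⟩ (x / r)
  have hco : ((((x % r).toNat : ℕ) : ℤ)) = x % r := Int.toNat_of_nonneg hi0
  simp only [hco] at h
  have hx : x % r + x / r * (r : ℤ) = x := by
    have := Int.emod_add_mul_ediv x r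
    linarith [this, mul_comm (x / (r:ℤ)) (r:ℤ)]
  rw [hx] at h
  exact h

lemma key2 (y : ℤ) :
    (y % r + 1) % r + (y / r) * r ∈ betaSet nu ↔ y ∈ betaSet lam := by
  have hrpos : (0 : ℤ) < r := by exact_mod_cast (by omega : 0 < r)
  have hi0 : 0 ≤ (y % r + 1) % r := Int.emod_nonneg _ (by omega)
  have hir : (y % r + 1) % r < r := Int.emod_lt_of_pos _ hrpos
  have hfin : ((y % r + 1) % r).toNat < r := by omega
  have h := hshift ⟨((y % r + 1) % r).toNat, hfin⟩ (y / r)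
  have hco : (((((y % r + 1) % r).toNat : ℕ) : ℤ)) = (y % r + 1) % r :=
    Int.toNat_of_nonneg hi0
  simp only [hco] at h
  have hback : ((y % r + 1) % r - 1) % r = y % r := by
    rw [emod_sub_one, add_sub_cancel_right, Int.emod_emod_of_dvd _ dvd_rfl]
  rw [hback] at h
  have hy : y % r + y / r * (r : ℤ) = y := by
    have := Int.emod_add_mul_ediv y r
    linarith [this, mul_comm (y / (r:ℤ)) (r:ℤ)]
  rw [hy] at h
  exact h

/-- The number of beta-set elements at least `k*r` is invariant under the
cyclic shift. -/
lemma ncard_shift (k : ℤ) :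
    {x ∈ betaSet nu | k * r ≤ x}.ncard = {x ∈ betaSet lam | k * r ≤ x}.ncard := by
  have hrpos : (0 : ℤ) < r := by exact_mod_cast (by omega : 0 < r)
  set g : ℤ → ℤ := fun x => (x % r - 1) % r + (x / r) * r with hg
  set h : ℤ → ℤ := fun y => (y % r + 1) % r + (y / r) * r with hh
  set S := {x ∈ betaSet nu | k * r ≤ x} with hS
  set T := {x ∈ betaSet lam | k * r ≤ x} with hT
  -- basic remainder facts
  have hgT : Set.MapsTo g S T := by
    rintro x ⟨hxB, hxk⟩
    refine ⟨(key1 r hr lam nu hshift x).mp hxB, ?_⟩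
    have h0 : 0 ≤ (x % r - 1) % r := Int.emod_nonneg _ (by omega)
    have hn : k ≤ x / r := by
      rw [Int.le_ediv_iff_mul_le hrpos]; exact hxk
    have : k * r ≤ (x / r) * r := mul_le_mul_of_nonneg_right hn hrpos.le
    simp only [hg]; omega
  have hhS : Set.MapsTo h T S := by
    rintro y ⟨hyB, hyk⟩
    refine ⟨(key2 r hr lam nu hshift y).mpr hyB, ?_⟩
    have h0 : 0 ≤ (y % r + 1) % r := Int.emod_nonneg _ (by omega)
    have hn : k ≤ y / r := by
      rw [Int.le_ediv_iff_mul_le hrpos]; exact hyk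
    have : k * r ≤ (y / r) * r := mul_le_mul_of_nonneg_right hn hrpos.le
    simp only [hh]; omega
  have hhg : ∀ x : ℤ, h (g x) = x := by
    intro x
    have h0 : 0 ≤ (x % r - 1) % r := Int.emod_nonneg _ (by omega)
    have h1 : (x % r - 1) % r < r := Int.emod_lt_of_pos _ hrpos
    obtain ⟨he, hd⟩ := split_emod (r : ℤ) ((x % r - 1) % r) (x / r) h0 h1
    simp only [hh, hg, he, hd]
    rw [emod_add_one, sub_add_cancel, Int.emod_emod_of_dvd _ dvd_rfl]
    have := Int.emod_add_mul_ediv x r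
    linarith [this, mul_comm (x / (r:ℤ)) (r:ℤ)]
  have hgh : ∀ y : ℤ, g (h y) = y := by
    intro y
    have h0 : 0 ≤ (y % r + 1) % r := Int.emod_nonneg _ (by omega)
    have h1 : (y % r + 1) % r < r := Int.emod_lt_of_pos _ hrpos
    obtain ⟨he, hd⟩ := split_emod (r : ℤ) ((y % r + 1) % r) (y / r) h0 h1
    simp only [hg, hh, he, hd]
    rw [emod_sub_one, add_sub_cancel_right, Int.emod_emod_of_dvd _ dvd_rfl]
    have := Int.emod_add_mul_ediv y r
    linarith [this, mul_comm (y / (r:ℤ)) (r:ℤ)]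
  have hinv : Set.InvOn h g S T := ⟨fun x _ => hhg x, fun y _ => hgh y⟩
  have hbij : Set.BijOn g S T := hinv.bijOn hgT hhS
  rw [← hbij.image_eq, Set.ncard_image_of_injOn hbij.injOn]

end Shift

end CyclicShiftAux

open CyclicShiftAux in
/-- If `ν = σλ` is obtained from `λ` by cyclically shifting the residue Maya
diagrams — i.e. `m_i(ν) = m_{(i-1) mod r}(λ)` for every residue `i` — then `λ`
and `ν` have the same set of cells of color `0` (cells `(row, col)` with
`row ≡ col (mod r)`). -/
theorem cyclic_shift_same_color_zero_cells (r : ℕ) (hr : 2 ≤ r)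
    (lam nu : YoungDiagram)
    (hshift : ∀ i : Fin r, ∀ n : ℤ,
      ((i : ℤ) + n * r ∈ betaSet nu ↔
        ((i : ℤ) - 1) % (r : ℤ) + n * r ∈ betaSet lam)) :
    {c : ℕ × ℕ | c ∈ nu ∧ (r : ℤ) ∣ ((c.1 : ℤ) - (c.2 : ℤ))} =
      {c : ℕ × ℕ | c ∈ lam ∧ (r : ℤ) ∣ ((c.1 : ℤ) - (c.2 : ℤ))} := by
  ext ⟨a, b⟩
  simp only [Set.mem_setOf_eq]
  have main : ∀ hd : (r : ℤ) ∣ ((a : ℤ) - b), ((a, b) ∈ nu ↔ (a, b) ∈ lam) := by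
    intro hd
    obtain ⟨k, hk⟩ : (r : ℤ) ∣ ((b : ℤ) - a) := (dvd_sub_comm).mp hd
    have hk' : (b : ℤ) - a = k * r := by linarith [hk]
    rw [cell_mem_iff nu a b, cell_mem_iff lam a b, hk',
      ncard_shift r hr lam nu hshift k]
  constructor
  · rintro ⟨hm, hd⟩; exact ⟨(main hd).mp hm, hd⟩
  · rintro ⟨hm, hd⟩; exact ⟨(main hd).mpr hm, hd⟩
end
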